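/- arXiv:2309.06539 — 4 statements merged into one kernel-verified Lean document; each statement's English description precedes it below -/
import Mathlib

section
/- Let H and K be abelian groups (written additively), β : K → Aut(H) a homomorphism into the automorphism group of H, and G = H ⋊_β K the semidirect product, with multiplication (h,k)(h',k') = (h + β_k(h'), k + k'). Let ω : G × G → 𝕋 be a 2-cocycle (ω(g, g'g'')·ω(g', g'') = ω(gg', g'')·ω(g, g') for all g, g', g'' ∈ G) such that ω((h,0),(h',0)) = 1 for all h, h' ∈ H. For a character x : H → 𝕋 and k ∈ K define (k.x)(h) = conj(ω((0,−k),(0,k))) · ω((0,−k),(h,0)) · ω((β_{−k}(h),−k),(0,k)) · x(β_{−k}(h)). Then: (i) k.x is again a character of H (a group homomorphism H → 𝕋); (ii) 0.x = x; and (iii) (k+k').x = k.(k'.x) for all k, k' ∈ K. Hence this formula defines an action of K on the character group Ĥ = Hom(H, 𝕋). -/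
/-!
For a 2-cocycle `ω` on a group `G`, put `τ_g(s) = ω(g⁻¹,g)⁻¹ ω(g⁻¹,s) ω(g⁻¹s,g)`: in the
`ω`-twisted group algebra, `δ_g⁻¹ δ_s δ_g = τ_g(s) δ_{g⁻¹sg}`. Hence for a normalized cocycle
`τ_g(st) ω(s,t) = τ_g(s) τ_g(t) ω(g⁻¹sg, g⁻¹tg)` and `τ_{gg'}(s) = τ_g(s) τ_{g'}(g⁻¹sg)`.
In `G = H ⋊_β K` one has `(k.x)(h) = τ_{(0,k)}(h,0) · x(β_{-k} h)`, and conjugation by `(0,k)`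
maps `(h,0)` to `(β_{-k} h, 0)`. As `ω` is trivial on `H`, the first identity makes `k.x` a
character, and the second, applied to `(0,k+k') = (0,k)(0,k')`, gives `(k+k').x = k.(k'.x)`.
-/

/-- Multiplication of the semidirect product `G = H ⋊_β K`:
`(h,k)(h',k') = (h + β_k(h'), k + k')`. -/
def sdMul {H K : Type*} [AddCommGroup H] [AddCommGroup K]
    (β : K → H ≃+ H) (g g' : H × K) : H × K :=
  (g.1 + β g.2 g'.1, g.2 + g'.2)

/-- The action of `k ∈ K` on a (function representing a) character `x` of `H`:
`(k.x)(h) = conj(ω((0,−k),(0,k))) · ω((0,−k),(h,0)) · ω((β_{−k}(h),−k),(0,k)) · x(β_{−k}(h))`,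
where conjugation on the circle group is inversion. -/
noncomputable def charAct {H K : Type*} [AddCommGroup H] [AddCommGroup K]
    (β : K → H ≃+ H) (ω : H × K → H × K → Circle) (k : K) (x : H → Circle) : H → Circle :=
  fun h =>
    (ω (0, -k) (0, k))⁻¹ * ω (0, -k) (h, 0) * ω (β (-k) h, -k) (0, k) * x (β (-k) h)

-- Cocycles with values in a trivial `G`-module `A`.
def IsTwoCocycle {G A : Type*} [Mul G] [CommGroup A] (ω : G → G → A) : Prop :=
  ∀ a b c : G, ω a (b * c) * ω b c = ω (a * b) c * ω a b

def conjFactor {G A : Type*} [Group G] [CommGroup A] (ω : G → G → A) (g s : G) : A :=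
  (ω g⁻¹ g)⁻¹ * ω g⁻¹ s * ω (g⁻¹ * s) g

namespace IsTwoCocycle

variable {G A : Type*} [Group G] [CommGroup A] {ω : G → G → A}

theorem map_one_left (hω : IsTwoCocycle ω) (g : G) : ω 1 g = ω 1 1 := by
  simpa only [one_mul, mul_right_inj] using hω 1 1 g

theorem map_one_right (hω : IsTwoCocycle ω) (g : G) : ω g 1 = ω 1 1 := by
  simpa only [mul_one, mul_right_inj] using (hω g 1 1).symm

theorem conjFactor_one (hω : IsTwoCocycle ω) (s : G) : conjFactor ω 1 s = ω 1 1 := by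
  simp [conjFactor, hω.map_one_left, hω.map_one_right]

theorem conjFactor_mul_right (hω : IsTwoCocycle ω) (h1 : ω 1 1 = 1) (g s t : G) :
    conjFactor ω g (s * t) * ω s t =
      conjFactor ω g s * conjFactor ω g t * ω (g⁻¹ * s * g) (g⁻¹ * t * g) := by
  have C a b c : _ := congrArg Additive.ofMul (hω a b c)
  have N : Additive.ofMul (ω 1 (g⁻¹ * t * g)) = 0 := by rw [hω.map_one_left, h1, ofMul_one]
  apply Additive.ofMul.injective
  simp only [conjFactor, ofMul_mul, ofMul_inv]
  linear_combination
    (norm := (simp only [ofMul_mul, mul_assoc, mul_inv_cancel_left, inv_mul_cancel]; abel))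
    C g⁻¹ s t - C (g⁻¹ * s) t g + C g⁻¹ t g + C (g⁻¹ * s) g (g⁻¹ * t * g)
      - C g⁻¹ g (g⁻¹ * t * g) - N

theorem conjFactor_mul_left (hω : IsTwoCocycle ω) (h1 : ω 1 1 = 1) (g g' s : G) :
    conjFactor ω (g * g') s = conjFactor ω g s * conjFactor ω g' (g⁻¹ * s * g) := by
  have C a b c : _ := congrArg Additive.ofMul (hω a b c)
  have N : Additive.ofMul (ω g'⁻¹ 1) = 0 := by rw [hω.map_one_right, h1, ofMul_one]
  apply Additive.ofMul.injective
  simp only [conjFactor, ofMul_mul, ofMul_inv, mul_inv_rev]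
  linear_combination (norm := (simp only [ofMul_mul, mul_assoc, inv_mul_cancel, mul_one]; abel))
    C (g'⁻¹ * g⁻¹ * s) g g' - C (g'⁻¹ * g⁻¹) g g' - C g'⁻¹ (g⁻¹ * s) g - C g'⁻¹ g⁻¹ s
      + C g'⁻¹ g⁻¹ g - N

end IsTwoCocycle

section SemidirectProduct

variable {H K : Type*} [AddCommGroup H] [AddCommGroup K] {β : K → H ≃+ H}
  (hβ : ∀ (k k' : K) (h : H), β (k + k') h = β k (β k' h))
include hβ

theorem apply_zero_of_map_add (h : H) : β 0 h = h :=
  (β 0).injective (by rw [← hβ, add_zero])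

theorem sdMul_assoc (a b c : H × K) :
    sdMul β (sdMul β a b) c = sdMul β a (sdMul β b c) := by
  simp only [sdMul, map_add, hβ, add_assoc]

theorem zero_sdMul (g : H × K) : sdMul β 0 g = g := by
  simp [sdMul, apply_zero_of_map_add hβ]

omit hβ in
theorem sdMul_zero (g : H × K) : sdMul β g 0 = g := by
  simp [sdMul]

omit hβ in
theorem sdMul_inv_cancel (g : H × K) : sdMul β (-β (-g.2) g.1, -g.2) g = 0 := by
  simp [sdMul]

omit hβ in
abbrev sdGroup (β : K → H ≃+ H) (hβ : ∀ (k k' : K) (h : H), β (k + k') h = β k (β k' h)) :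
    Group (H × K) where
  mul := sdMul β
  mul_assoc := sdMul_assoc hβ
  one := 0
  one_mul := zero_sdMul hβ
  mul_one := sdMul_zero
  inv g := (-β (-g.2) g.1, -g.2)
  inv_mul_cancel := sdMul_inv_cancel

theorem sdGroup_mk_zero_mul_mk_zero (h h' : H) :
    letI := sdGroup β hβ; ((h, 0) : H × K) * (h', 0) = (h + h', 0) := by
  show sdMul β _ _ = _
  simp [sdMul, apply_zero_of_map_add hβ]

theorem sdGroup_zero_mk_mul_zero_mk (k k' : K) :
    letI := sdGroup β hβ; ((0, k) : H × K) * (0, k') = (0, k + k') := by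
  show sdMul β _ _ = _
  simp [sdMul]

theorem sdGroup_inv_zero_mk (k : K) :
    letI := sdGroup β hβ; ((0, k) : H × K)⁻¹ = (0, -k) := by
  show ((-β (-k) 0, -k) : H × K) = _
  simp

theorem sdGroup_zero_mk_mul_mk_zero (k : K) (h : H) :
    letI := sdGroup β hβ; ((0, k) : H × K) * (h, 0) = (β k h, k) := by
  show sdMul β _ _ = _
  simp [sdMul]

theorem sdGroup_conj_mk_zero (k : K) (h : H) :
    letI := sdGroup β hβ; ((0, k) : H × K)⁻¹ * (h, 0) * (0, k) = (β (-k) h, 0) := by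
  rw [sdGroup_inv_zero_mk hβ, sdGroup_zero_mk_mul_mk_zero hβ]
  show sdMul β _ _ = _
  simp [sdMul]

theorem charAct_eq_conjFactor (ω : H × K → H × K → Circle) (k : K) (x : H → Circle) (h : H) :
    letI := sdGroup β hβ
    charAct β ω k x h = conjFactor ω (0, k) (h, 0) * x (β (-k) h) := by
  simp only [conjFactor, sdGroup_inv_zero_mk hβ, sdGroup_zero_mk_mul_mk_zero hβ]
  rfl

end SemidirectProduct

theorem charAct_is_action_general {H K : Type*} [AddCommGroup H] [AddCommGroup K]
    (β : K → H ≃+ H)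
    (hβ : ∀ (k k' : K) (h : H), β (k + k') h = β k (β k' h))
    (ω : H × K → H × K → Circle)
    (hω : ∀ g g' g'' : H × K,
      ω g (sdMul β g' g'') * ω g' g'' = ω (sdMul β g g') g'' * ω g g')
    (hωH : ∀ h h' : H, ω (h, 0) (h', 0) = 1) :
    (∀ (k : K) (x : H → Circle), (∀ h h' : H, x (h + h') = x h * x h') →
        ∀ h h' : H, charAct β ω k x (h + h') = charAct β ω k x h * charAct β ω k x h') ∧
    (∀ x : H → Circle, (∀ h h' : H, x (h + h') = x h * x h') →
        charAct β ω 0 x = x) ∧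
    (∀ (k k' : K) (x : H → Circle), (∀ h h' : H, x (h + h') = x h * x h') →
        charAct β ω (k + k') x = charAct β ω k (charAct β ω k' x)) := by
  let := sdGroup β hβ
  have hcocycle : IsTwoCocycle ω := hω
  have h1 : ω 1 1 = 1 := hωH 0 0
  refine ⟨fun k x hx h h' => ?_, fun x _ => funext fun h => ?_,
    fun k k' x _ => funext fun h => ?_⟩
  · have key := hcocycle.conjFactor_mul_right h1 (0, k) (h, 0) (h', 0)
    rw [sdGroup_conj_mk_zero hβ, sdGroup_conj_mk_zero hβ, sdGroup_mk_zero_mul_mk_zero hβ, hωH,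
      hωH, mul_one, mul_one] at key
    rw [charAct_eq_conjFactor hβ, charAct_eq_conjFactor hβ, charAct_eq_conjFactor hβ, key,
      map_add, hx, mul_mul_mul_comm]
  · have h00 : ((0, 0) : H × K) = 1 := rfl
    rw [charAct_eq_conjFactor hβ, h00, hcocycle.conjFactor_one, h1, one_mul, neg_zero,
      apply_zero_of_map_add hβ]
  · rw [charAct_eq_conjFactor hβ, charAct_eq_conjFactor hβ, charAct_eq_conjFactor hβ,
      ← sdGroup_zero_mk_mul_zero_mk hβ, hcocycle.conjFactor_mul_left h1, sdGroup_conj_mk_zero hβ,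
      neg_add_rev, hβ, mul_assoc]

/-- Let `H, K` be abelian groups, `β : K → Aut(H)` a homomorphism, `G = H ⋊_β K`, and `ω` a
2-cocycle on `G` with `ω|_{H×H} ≡ 1`.  Then `(k, x) ↦ k.x` is an action of `K` on the character
group `Ĥ`: `k.x` is again a character, `0.x = x`, and `(k+k').x = k.(k'.x)`. -/
theorem charAct_is_action {H K : Type*} [AddCommGroup H] [AddCommGroup K]
    (β : K → H ≃+ H)
    (hβ0 : ∀ h : H, β 0 h = h)
    (hβ : ∀ (k k' : K) (h : H), β (k + k') h = β k (β k' h))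
    (ω : H × K → H × K → Circle)
    (hω : ∀ g g' g'' : H × K,
      ω g (sdMul β g' g'') * ω g' g'' = ω (sdMul β g g') g'' * ω g g')
    (hωH : ∀ h h' : H, ω (h, 0) (h', 0) = 1) :
    (∀ (k : K) (x : H → Circle), (∀ h h' : H, x (h + h') = x h * x h') →
        ∀ h h' : H, charAct β ω k x (h + h') = charAct β ω k x h * charAct β ω k x h') ∧
    (∀ x : H → Circle, (∀ h h' : H, x (h + h') = x h * x h') →
        charAct β ω 0 x = x) ∧
    (∀ (k k' : K) (x : H → Circle), (∀ h h' : H, x (h + h') = x h * x h') →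
        charAct β ω (k + k') x = charAct β ω k (charAct β ω k' x)) :=
  charAct_is_action_general β hβ ω hω hωH
end

section
/- Assume the algebraic conditions of Assumption 5.1 (see context). Suppose γ', η' ∈ H satisfy s(γ') = r(η'). Then for every γ'' in the T-orbit [γ'] there exists a unique η'' in the T-orbit [η'] such that s(γ'') = r(η'') (i.e. (γ'', η'') is composable). -/
universe u v w

/-- A groupoid, presented by its set `H` of arrows and its set `U` of units: range and source
maps `r, s : H → U`, a (totalized) partially-defined multiplication which is only meaningful on
composable pairs (`s g = r h`), inversion, and the embedding `unit : U → H` of units. -/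
structure RawGroupoid (H : Type u) (U : Type v) where
  r : H → U
  s : H → U
  mul : H → H → H
  inv : H → H
  unit : U → H
  r_unit : ∀ x, r (unit x) = x
  s_unit : ∀ x, s (unit x) = x
  r_mul : ∀ g h, s g = r h → r (mul g h) = r g
  s_mul : ∀ g h, s g = r h → s (mul g h) = s h
  r_inv : ∀ g, r (inv g) = s g
  s_inv : ∀ g, s (inv g) = r g
  inv_inv : ∀ g, inv (inv g) = g
  mul_assoc : ∀ g h k, s g = r h → s h = r k → mul (mul g h) k = mul g (mul h k)
  unit_mul : ∀ g, mul (unit (r g)) g = g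
  mul_unit : ∀ g, mul g (unit (s g)) = g
  inv_mul : ∀ g, mul (inv g) g = unit (s g)
  mul_inv : ∀ g, mul g (inv g) = unit (r g)

/-- A bundle of abelian groups: a surjection `p : T → X` together with a fibrewise abelian
group structure (the multiplication is totalized; it is only meaningful within a fibre). -/
structure AbGroupBundle (T : Type u) (X : Type v) where
  p : T → X
  p_surj : Function.Surjective p
  e : X → T
  bmul : T → T → T
  binv : T → T
  p_e : ∀ x, p (e x) = x
  p_bmul : ∀ s t, p s = p t → p (bmul s t) = p t
  p_binv : ∀ t, p (binv t) = p t
  bmul_assoc : ∀ s t u, p s = p t → p t = p u → bmul (bmul s t) u = bmul s (bmul t u)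
  bmul_comm : ∀ s t, p s = p t → bmul s t = bmul t s
  e_bmul : ∀ t, bmul (e (p t)) t = t
  binv_bmul : ∀ t, bmul (binv t) t = e (p t)

/-- The algebraic conditions of Assumption 5.1: a groupoid `H` whose unit space `U = H⁰` is a
bundle of abelian groups `p : U → X`, together with commuting free left and right actions
`▶ = actL` and `◀ = actR` of `U` on `H` along the moment maps `p∘r` and `p∘s` respectively, and
maps `λ = lam` and `ρ = rho` intertwining them, satisfying conditions (1a), (1b) and
(2a)–(2f). -/
structure Assumption51 (H : Type u) (U : Type v) (X : Type w) where
  gpd : RawGroupoid H U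
  bund : AbGroupBundle U X
  actL : U → H → H
  actR : H → U → H
  lam : H → U → U
  rho : H → U → U
  -- `actL` is a left action of `T = U` on `H` along `p ∘ r`
  actL_id : ∀ γ, actL (bund.e (bund.p (gpd.r γ))) γ = γ
  actL_mul : ∀ t t' γ, bund.p t = bund.p t' → bund.p t' = bund.p (gpd.r γ) →
    actL (bund.bmul t t') γ = actL t (actL t' γ)
  pr_actL : ∀ t γ, bund.p t = bund.p (gpd.r γ) → bund.p (gpd.r (actL t γ)) = bund.p t
  actL_free : ∀ t γ, bund.p t = bund.p (gpd.r γ) → actL t γ = γ →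
    t = bund.e (bund.p (gpd.r γ))
  -- `actR` is a right action of `T = U` on `H` along `p ∘ s`
  actR_id : ∀ γ, actR γ (bund.e (bund.p (gpd.s γ))) = γ
  actR_mul : ∀ γ t t', bund.p t = bund.p (gpd.s γ) → bund.p t' = bund.p t →
    actR γ (bund.bmul t t') = actR (actR γ t) t'
  ps_actR : ∀ γ t, bund.p t = bund.p (gpd.s γ) → bund.p (gpd.s (actR γ t)) = bund.p t
  actR_free : ∀ γ t, bund.p t = bund.p (gpd.s γ) → actR γ t = γ →
    t = bund.e (bund.p (gpd.s γ))
  -- the two actions commute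
  act_comm : ∀ t γ t', bund.p t = bund.p (gpd.r γ) → bund.p t' = bund.p (gpd.s γ) →
    actR (actL t γ) t' = actL t (actR γ t')
  -- (1a): `t ▶ u = u ◀ t` for units `u`
  unit_act : ∀ u t, bund.p t = bund.p u → actL t (gpd.unit u) = actR (gpd.unit u) t
  -- (1b): `r(t ▶ γ) = t ▶ r(γ)` and `s(η ◀ t) = s(η) ◀ t`
  r_actL : ∀ t γ, bund.p t = bund.p (gpd.r γ) →
    gpd.unit (gpd.r (actL t γ)) = actL t (gpd.unit (gpd.r γ))
  s_actR : ∀ γ t, bund.p t = bund.p (gpd.s γ) →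
    gpd.unit (gpd.s (actR γ t)) = actR (gpd.unit (gpd.s γ)) t
  -- `λ_η : T_{p_s(η)} → T_{p_r(η)}` and `ρ_η : T_{p_r(η)} → T_{p_s(η)}`
  lam_p : ∀ η t, bund.p t = bund.p (gpd.s η) → bund.p (lam η t) = bund.p (gpd.r η)
  rho_p : ∀ η t, bund.p t = bund.p (gpd.r η) → bund.p (rho η t) = bund.p (gpd.s η)
  -- (2a)–(2f)
  spec_a : ∀ η t, bund.p t = bund.p (gpd.s η) → actR η t = actL (lam η t) η
  spec_b : ∀ η t, bund.p t = bund.p (gpd.r η) → actL t η = actR η (rho η t)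
  spec_c : ∀ γ η t, gpd.s γ = gpd.r η → bund.p t = bund.p (gpd.s η) →
    actR (gpd.mul γ η) t = gpd.mul (actR γ (lam η t)) (actR η t)
  spec_d : ∀ γ η t, gpd.s γ = gpd.r η → bund.p t = bund.p (gpd.r γ) →
    actL t (gpd.mul γ η) = gpd.mul (actL t γ) (actL (rho γ t) η)
  spec_e : ∀ η t, bund.p t = bund.p (gpd.s η) → gpd.inv (actR η t) = actL t (gpd.inv η)
  spec_f : ∀ η t, bund.p t = bund.p (gpd.r η) → gpd.inv (actL t η) = actR (gpd.inv η) t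

namespace Assumption51

variable {H : Type u} {U : Type v} {X : Type w} (A : Assumption51 H U X)

/-- The moment map `p ∘ r`. -/
def pr (γ : H) : X := A.bund.p (A.gpd.r γ)

/-- The moment map `p ∘ s`. -/
def ps (γ : H) : X := A.bund.p (A.gpd.s γ)

/-- The orbit `[γ] = {γ ◀ t : t ∈ T_{p_s(γ)}}` of `γ` under the right `T`-action. -/
def orbit (γ : H) : Set H := {η | ∃ t : U, A.bund.p t = A.ps γ ∧ η = A.actR γ t}

/-- The orbit of `γ` under the left `T`-action. -/
def orbitL (γ : H) : Set H := {η | ∃ t : U, A.bund.p t = A.pr γ ∧ η = A.actL t γ}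

/-- The product `[γ][η]` of two `T`-orbits: all products of composable representatives. -/
def classProd (γ η : H) : Set H :=
  {ξ | ∃ γ' ∈ A.orbit γ, ∃ η' ∈ A.orbit η, A.gpd.s γ' = A.gpd.r η' ∧ ξ = A.gpd.mul γ' η'}

end Assumption51

/-!
The partner of `γ' ◀ t` is `t ▶ η'`: it lies in `[η']` by (2b), and (1a), (1b) give
`s(γ' ◀ t) = s(γ') ◀ t = t ▶ r(η') = r(t ▶ η')`. Conversely, by (2a) every element of `[η']`
has the form `λ ▶ η'`, whose range `λ ▶ r(η')` determines `λ` because the left action is free.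
-/

theorem RawGroupoid.unit_injective {H : Type u} {U : Type v} (G : RawGroupoid H U) :
    Function.Injective G.unit := fun a b hab => by
  rw [← G.r_unit a, hab, G.r_unit]

theorem AbGroupBundle.eq_of_binv_bmul_eq_e {T : Type u} {X : Type v} (B : AbGroupBundle T X)
    {s t : T} (hst : B.p s = B.p t) (he : B.bmul (B.binv s) t = B.e (B.p s)) : s = t := by
  have hinv : B.p (B.binv s) = B.p s := B.p_binv s
  calc s = B.bmul (B.e (B.p s)) s := (B.e_bmul s).symm
    _ = B.bmul s (B.bmul (B.binv s) t) := by
        rw [← he, B.bmul_comm _ _ (by rw [B.p_bmul _ _ (hinv.trans hst), hst])]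
    _ = B.bmul (B.bmul s (B.binv s)) t :=
        (B.bmul_assoc _ _ _ hinv.symm (hinv.trans hst)).symm
    _ = t := by rw [B.bmul_comm _ _ hinv.symm, B.binv_bmul, hst, B.e_bmul]

namespace Assumption51

variable {H : Type u} {U : Type v} {X : Type w} (A : Assumption51 H U X)

theorem eq_of_actL_eq {s₁ s₂ : U} {γ : H} (h₁ : A.bund.p s₁ = A.bund.p (A.gpd.r γ))
    (h₂ : A.bund.p s₂ = A.bund.p (A.gpd.r γ)) (he : A.actL s₁ γ = A.actL s₂ γ) : s₁ = s₂ := by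
  have hinv : A.bund.p (A.bund.binv s₁) = A.bund.p s₁ := A.bund.p_binv s₁
  have h₁₂ : A.bund.p s₁ = A.bund.p s₂ := h₁.trans h₂.symm
  have hfix : A.actL (A.bund.bmul (A.bund.binv s₁) s₂) γ = γ := by
    rw [A.actL_mul _ _ _ (hinv.trans h₁₂) h₂, ← he, ← A.actL_mul _ _ _ hinv h₁,
      A.bund.binv_bmul, h₁, A.actL_id]
  have hp : A.bund.p (A.bund.bmul (A.bund.binv s₁) s₂) = A.bund.p (A.gpd.r γ) := by
    rw [A.bund.p_bmul _ _ (hinv.trans h₁₂), h₂]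
  exact A.bund.eq_of_binv_bmul_eq_e h₁₂ ((A.actL_free _ _ hp hfix).trans (by rw [h₁]))

theorem eq_of_r_actL_eq {s₁ s₂ : U} {γ : H} (h₁ : A.bund.p s₁ = A.bund.p (A.gpd.r γ))
    (h₂ : A.bund.p s₂ = A.bund.p (A.gpd.r γ))
    (he : A.gpd.r (A.actL s₁ γ) = A.gpd.r (A.actL s₂ γ)) : s₁ = s₂ := by
  have hu := congrArg A.gpd.unit he
  rw [A.r_actL _ _ h₁, A.r_actL _ _ h₂] at hu
  exact A.eq_of_actL_eq (by rwa [A.gpd.r_unit]) (by rwa [A.gpd.r_unit]) hu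

theorem orbit_eq_orbitL (γ : H) : A.orbit γ = A.orbitL γ := by
  ext η
  constructor
  · rintro ⟨t, ht, rfl⟩
    exact ⟨A.lam γ t, A.lam_p γ t ht, A.spec_a γ t ht⟩
  · rintro ⟨t, ht, rfl⟩
    exact ⟨A.rho γ t, A.rho_p γ t ht, A.spec_b γ t ht⟩

theorem s_actR_eq_r_actL {γ η : H} {t : U} (h : A.gpd.s γ = A.gpd.r η)
    (ht : A.bund.p t = A.bund.p (A.gpd.s γ)) :
    A.gpd.s (A.actR γ t) = A.gpd.r (A.actL t η) := by
  have htr : A.bund.p t = A.bund.p (A.gpd.r η) := h ▸ ht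
  apply A.gpd.unit_injective
  rw [A.s_actR γ t ht, A.r_actL t η htr, A.unit_act _ t htr, h]

end Assumption51

/-- Lemma 5.5: under Assumption 5.1, if `γ', η' ∈ H` satisfy `s(γ') = r(η')`, then for every
`γ''` in the `T`-orbit `[γ']` there is a unique `η''` in the `T`-orbit `[η']` such that
`(γ'', η'')` is composable. -/
theorem lemma55 {H : Type u} {U : Type v} {X : Type w} (A : Assumption51 H U X)
    (γ' η' : H) (h : A.gpd.s γ' = A.gpd.r η') :
    ∀ γ'' ∈ A.orbit γ',
      ∃! η'' : H, η'' ∈ A.orbit η' ∧ A.gpd.s γ'' = A.gpd.r η'' := by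
  rintro γ'' ⟨t, ht, rfl⟩
  have htr : A.bund.p t = A.bund.p (A.gpd.r η') := by rw [ht, Assumption51.ps, h]
  have hcomp := A.s_actR_eq_r_actL h ht
  rw [A.orbit_eq_orbitL]
  refine ⟨A.actL t η', ⟨⟨t, htr, rfl⟩, hcomp⟩, ?_⟩
  rintro _ ⟨⟨t₂, ht₂, rfl⟩, hcomp₂⟩
  rw [A.eq_of_r_actL_eq ht₂ htr (hcomp₂.symm.trans hcomp)]
end

section
/- Assume the algebraic conditions of Assumption 5.1 (see context). Then: (i) for every γ ∈ H and t ∈ T_{p_s(γ)}, ρ_{γ◀t} = ρ_γ (in particular p_r(γ◀t) = p_r(γ)); (ii) for γ ∈ H and a group homomorphism χ : T_{p_s(γ)} → 𝕋, setting γ⋄χ := χ∘ρ_γ (an element of Hom(T_{p_r(γ)}, 𝕋)) defines an action of H on the bundle T̂ = ⊔_{x∈X} Hom(T_x, 𝕋): (γη)⋄χ = γ⋄(η⋄χ) for composable γ, η, and u⋄χ = χ for units u; (iii) (γ◀t)⋄χ = γ⋄χ, so ⋄ descends to an action of the quotient groupoid H/T on T̂, written [γ]⋄χ; (iv) [γ]⋄(χ₁·χ₂)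 = ([γ]⋄χ₁)·([γ]⋄χ₂), where characters on a common fibre are multiplied pointwise. -/
/-!
Freeness of the right action makes `ρ_η(τ)` the unique `t'` with `τ ▶ η = η ◀ t'`. Each
identity for `ρ` (`ρ_{γ◀t} = ρ_γ`, multiplicativity of `ρ_γ`, `ρ_{γη} = ρ_η ∘ ρ_γ` and
`ρ_u = id`) is therefore proved by checking that the right-hand side satisfies this equation,
using the action laws, (2b)–(2d) and commutativity of the fibres. The statements about
`γ ⋄ χ = χ ∘ ρ_γ` then follow by precomposing with `χ`.
-/

universe u v w

namespace Assumption51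

/-- The action `γ ⋄ χ := χ ∘ ρ_γ` of `H` on (functions representing) characters of the fibres
of the bundle `T`. -/
def dia {H : Type u} {U : Type v} {X : Type w} (A : Assumption51 H U X)
    (γ : H) (χ : U → Circle) : U → Circle := fun t => χ (A.rho γ t)

end Assumption51

namespace AbGroupBundle

variable {T : Type u} {X : Type v} (B : AbGroupBundle T X)

lemma bmul_e (t : T) : B.bmul t (B.e (B.p t)) = t := by
  rw [B.bmul_comm _ _ (B.p_e (B.p t)).symm, B.e_bmul]

lemma bmul_binv (t : T) : B.bmul t (B.binv t) = B.e (B.p t) := by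
  rw [B.bmul_comm _ _ (B.p_binv t).symm, B.binv_bmul]

lemma eq_of_binv_bmul_eq_e_s9 {a b : T} (hab : B.p a = B.p b)
    (h : B.bmul (B.binv b) a = B.e (B.p b)) : a = b := by
  have hb : B.p (B.binv b) = B.p a := (B.p_binv b).trans hab.symm
  calc a = B.bmul (B.e (B.p a)) a := (B.e_bmul a).symm
    _ = B.bmul (B.bmul b (B.binv b)) a := by rw [B.bmul_binv, hab]
    _ = B.bmul b (B.bmul (B.binv b) a) := B.bmul_assoc _ _ _ (B.p_binv b).symm hb
    _ = b := by rw [h, B.bmul_e]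

end AbGroupBundle

namespace Assumption51

variable {H : Type u} {U : Type v} {X : Type w} (A : Assumption51 H U X)

lemma eq_of_actR_eq {η : H} {a b : U} (ha : A.bund.p a = A.ps η) (hb : A.bund.p b = A.ps η)
    (h : A.actR η a = A.actR η b) : a = b := by
  have hib : A.bund.p (A.bund.binv b) = A.bund.p b := A.bund.p_binv b
  have hfix : A.actR η (A.bund.bmul a (A.bund.binv b)) = η :=
    calc A.actR η (A.bund.bmul a (A.bund.binv b))
        = A.actR (A.actR η b) (A.bund.binv b) := by
          rw [A.actR_mul η a _ ha (hib.trans (hb.trans ha.symm)), h]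
      _ = A.actR η (A.bund.e (A.bund.p (A.gpd.s η))) := by
          rw [← A.actR_mul η b _ hb hib, A.bund.bmul_binv, hb, ps]
      _ = η := A.actR_id η
  have hp : A.bund.p (A.bund.bmul a (A.bund.binv b)) = A.ps η :=
    (A.bund.p_bmul a _ (hib.trans (hb.trans ha.symm)).symm).trans (hib.trans hb)
  have htriv := A.actR_free η _ hp hfix
  rw [A.bund.bmul_comm a _ (ha.trans (hib.trans hb).symm)] at htriv
  exact A.bund.eq_of_binv_bmul_eq_e_s9 (ha.trans hb.symm) (by rw [htriv, hb, ps])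

lemma eq_of_actL_eq_s9 {η : H} {a b : U} (ha : A.bund.p a = A.pr η) (hb : A.bund.p b = A.pr η)
    (h : A.actL a η = A.actL b η) : a = b := by
  have hib : A.bund.p (A.bund.binv b) = A.bund.p b := A.bund.p_binv b
  have hfix : A.actL (A.bund.bmul (A.bund.binv b) a) η = η :=
    calc A.actL (A.bund.bmul (A.bund.binv b) a) η
        = A.actL (A.bund.binv b) (A.actL b η) := by
          rw [A.actL_mul _ a η (hib.trans (hb.trans ha.symm)) ha, h]
      _ = A.actL (A.bund.e (A.bund.p (A.gpd.r η))) η := by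
          rw [← A.actL_mul _ b η hib hb, A.bund.binv_bmul, hb, pr]
      _ = η := A.actL_id η
  have hp : A.bund.p (A.bund.bmul (A.bund.binv b) a) = A.pr η :=
    (A.bund.p_bmul _ a (hib.trans (hb.trans ha.symm))).trans ha
  have htriv := A.actL_free _ η hp hfix
  exact A.bund.eq_of_binv_bmul_eq_e_s9 (ha.trans hb.symm) (by rw [htriv, hb, pr])

lemma eq_rho_of_actL_eq_actR {η : H} {τ t' : U} (hτ : A.bund.p τ = A.pr η)
    (ht' : A.bund.p t' = A.ps η) (h : A.actL τ η = A.actR η t') : t' = A.rho η τ :=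
  A.eq_of_actR_eq ht' (A.rho_p η τ hτ) (h.symm.trans (A.spec_b η τ hτ))

lemma lam_rho {η : H} {t : U} (ht : A.bund.p t = A.pr η) : A.lam η (A.rho η t) = t := by
  have hρ : A.bund.p (A.rho η t) = A.ps η := A.rho_p η t ht
  refine A.eq_of_actL_eq_s9 (A.lam_p η _ hρ) ht ?_
  rw [← A.spec_a η _ hρ, ← A.spec_b η t ht]

lemma pr_actR {γ : H} {t : U} (ht : A.bund.p t = A.ps γ) : A.pr (A.actR γ t) = A.pr γ := by
  have hlam : A.bund.p (A.lam γ t) = A.pr γ := A.lam_p γ t ht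
  rw [A.spec_a γ t ht, pr, A.pr_actL _ γ hlam, hlam]

lemma rho_actR {γ : H} {t τ : U} (ht : A.bund.p t = A.ps γ) (hτ : A.bund.p τ = A.pr γ) :
    A.rho (A.actR γ t) τ = A.rho γ τ := by
  have hρ : A.bund.p (A.rho γ τ) = A.ps γ := A.rho_p γ τ hτ
  have hps : A.ps (A.actR γ t) = A.ps γ := (A.ps_actR γ t ht).trans ht
  refine (A.eq_rho_of_actL_eq_actR (hτ.trans (A.pr_actR ht).symm) (hρ.trans hps.symm) ?_).symm
  calc A.actL τ (A.actR γ t)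
      = A.actR (A.actR γ (A.rho γ τ)) t := by rw [← A.act_comm τ γ t hτ ht, A.spec_b γ τ hτ]
    _ = A.actR γ (A.bund.bmul (A.rho γ τ) t) := (A.actR_mul γ _ t hρ (ht.trans hρ.symm)).symm
    _ = A.actR γ (A.bund.bmul t (A.rho γ τ)) := by rw [A.bund.bmul_comm _ t (hρ.trans ht.symm)]
    _ = A.actR (A.actR γ t) (A.rho γ τ) := A.actR_mul γ t _ ht (hρ.trans ht.symm)

lemma rho_bmul {γ : H} {τ τ' : U} (hτ : A.bund.p τ = A.pr γ) (hτ' : A.bund.p τ' = A.pr γ) :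
    A.rho γ (A.bund.bmul τ τ') = A.bund.bmul (A.rho γ τ) (A.rho γ τ') := by
  have hρ : A.bund.p (A.rho γ τ) = A.ps γ := A.rho_p γ τ hτ
  have hρ' : A.bund.p (A.rho γ τ') = A.ps γ := A.rho_p γ τ' hτ'
  refine (A.eq_rho_of_actL_eq_actR ((A.bund.p_bmul τ τ' (hτ.trans hτ'.symm)).trans hτ')
    ((A.bund.p_bmul _ _ (hρ.trans hρ'.symm)).trans hρ') ?_).symm
  calc A.actL (A.bund.bmul τ τ') γ
      = A.actL τ (A.actR γ (A.rho γ τ')) := by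
        rw [A.actL_mul τ τ' γ (hτ.trans hτ'.symm) hτ', A.spec_b γ τ' hτ']
    _ = A.actR (A.actR γ (A.rho γ τ)) (A.rho γ τ') := by
        rw [← A.act_comm τ γ _ hτ hρ', A.spec_b γ τ hτ]
    _ = A.actR γ (A.bund.bmul (A.rho γ τ) (A.rho γ τ')) :=
        (A.actR_mul γ _ _ hρ (hρ'.trans hρ.symm)).symm

lemma rho_mul {γ η : H} (hc : A.gpd.s γ = A.gpd.r η) {τ : U} (hτ : A.bund.p τ = A.pr γ) :
    A.rho (A.gpd.mul γ η) τ = A.rho η (A.rho γ τ) := by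
  have hρ : A.bund.p (A.rho γ τ) = A.pr η := (A.rho_p γ τ hτ).trans (congrArg A.bund.p hc)
  have hρρ : A.bund.p (A.rho η (A.rho γ τ)) = A.ps η := A.rho_p η _ hρ
  have hpr : A.pr (A.gpd.mul γ η) = A.pr γ := congrArg A.bund.p (A.gpd.r_mul γ η hc)
  have hps : A.ps (A.gpd.mul γ η) = A.ps η := congrArg A.bund.p (A.gpd.s_mul γ η hc)
  refine (A.eq_rho_of_actL_eq_actR (hτ.trans hpr.symm) (hρρ.trans hps.symm) ?_).symm
  -- `ρ_γ τ = λ_η (ρ_η (ρ_γ τ))` puts the product of (2d) into the shape of (2c)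
  rw [A.spec_d γ η τ hc hτ, A.spec_b γ τ hτ, A.spec_b η _ hρ, A.spec_c γ η _ hc hρρ,
    A.lam_rho hρ]

lemma rho_unit {x τ : U} (hτ : A.bund.p τ = A.bund.p x) : A.rho (A.gpd.unit x) τ = τ := by
  have hr : A.pr (A.gpd.unit x) = A.bund.p x := congrArg A.bund.p (A.gpd.r_unit x)
  have hs : A.ps (A.gpd.unit x) = A.bund.p x := congrArg A.bund.p (A.gpd.s_unit x)
  exact (A.eq_rho_of_actL_eq_actR (hτ.trans hr.symm) (hτ.trans hs.symm) (A.unit_act x τ hτ)).symm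

end Assumption51

/-- Lemma 5.8 (with the key step `ρ_{γ◀t} = ρ_γ` of its proof): under Assumption 5.1,
(i) `ρ_{γ◀t} = ρ_γ`, in particular `p_r(γ◀t) = p_r(γ)`;
(ii) `γ ⋄ χ := χ ∘ ρ_γ` sends characters of `T_{p_s(γ)}` to characters of `T_{p_r(γ)}` and
defines an action of `H` on `T̂`: `(γη) ⋄ χ = γ ⋄ (η ⋄ χ)` for composable pairs and units act
trivially;
(iii) `(γ◀t) ⋄ χ = γ ⋄ χ`, so `⋄` descends to an action of `H/T` on `T̂`;
(iv) `γ ⋄ (χ₁·χ₂) = (γ ⋄ χ₁)·(γ ⋄ χ₂)`. -/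
theorem lemma58 {H : Type u} {U : Type v} {X : Type w} (A : Assumption51 H U X) :
    -- (i) `ρ_{γ◀t} = ρ_γ`, in particular `p_r(γ◀t) = p_r(γ)`
    (∀ γ t, A.bund.p t = A.ps γ →
        A.pr (A.actR γ t) = A.pr γ ∧
        ∀ τ, A.bund.p τ = A.pr γ → A.rho (A.actR γ t) τ = A.rho γ τ) ∧
    -- (ii) `γ ⋄ χ` is a character of `T_{p_r(γ)}` whenever `χ` is one of `T_{p_s(γ)}` ...
    (∀ (γ : H) (χ : U → Circle),
        (∀ t t', A.bund.p t = A.ps γ → A.bund.p t' = A.ps γ →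
          χ (A.bund.bmul t t') = χ t * χ t') →
        ∀ τ τ', A.bund.p τ = A.pr γ → A.bund.p τ' = A.pr γ →
          A.dia γ χ (A.bund.bmul τ τ') = A.dia γ χ τ * A.dia γ χ τ') ∧
    -- ... and `⋄` is an action: `(γη) ⋄ χ = γ ⋄ (η ⋄ χ)`, and units act trivially
    (∀ γ η, A.gpd.s γ = A.gpd.r η → ∀ (χ : U → Circle) τ, A.bund.p τ = A.pr γ →
        A.dia (A.gpd.mul γ η) χ τ = A.dia γ (A.dia η χ) τ) ∧
    (∀ (x : U) (χ : U → Circle) (τ : U), A.bund.p τ = A.bund.p x →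
        A.dia (A.gpd.unit x) χ τ = χ τ) ∧
    -- (iii) `(γ◀t) ⋄ χ = γ ⋄ χ`, so `⋄` descends to `H/T`
    (∀ γ t (χ : U → Circle) τ, A.bund.p t = A.ps γ → A.bund.p τ = A.pr γ →
        A.dia (A.actR γ t) χ τ = A.dia γ χ τ) ∧
    -- (iv) `γ ⋄ (χ₁·χ₂) = (γ ⋄ χ₁)·(γ ⋄ χ₂)`
    (∀ γ (χ₁ χ₂ : U → Circle) τ, A.bund.p τ = A.pr γ →
        A.dia γ (fun t => χ₁ t * χ₂ t) τ = A.dia γ χ₁ τ * A.dia γ χ₂ τ) := by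
  refine ⟨fun γ t ht => ⟨A.pr_actR ht, fun τ hτ => A.rho_actR ht hτ⟩, ?_,
    fun γ η hc χ τ hτ => congrArg χ (A.rho_mul hc hτ),
    fun x χ τ hτ => congrArg χ (A.rho_unit hτ),
    fun γ t χ τ ht hτ => congrArg χ (A.rho_actR ht hτ),
    fun γ χ₁ χ₂ τ hτ => rfl⟩
  intro γ χ hχ τ τ' hτ hτ'
  exact (congrArg χ (A.rho_bmul hτ hτ')).trans (hχ _ _ (A.rho_p γ τ hτ) (A.rho_p γ τ' hτ'))
end

section
/- Let G be a groupoid and S ⊆ Iso(G) a wide normal subgroupoid with abelian isotropy fibres S_u; let Ŝ_u = Hom(S_u, 𝕋), Ŝ = ⊔_u Ŝ_u, and let H = (G/S) ⋉ Ŝ be the action groupoid (see context). Then: (i) for γ ∈ G and t̂ ∈ Ŝ_{r(γ)}, the character Ad_γ(t̂) ∈ Ŝ_{s(γ)} defined by Ad_γ(t̂)(a) = t̂(γaγ⁻¹) depends only on the class [γ] ∈ G/S; in particular the action ([γ].x)(a) = x(γ⁻¹aγ) of G/S on Ŝ is well defined. (ii) The formulas t̂ ▶ ([γ], x) := ([γ],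 Ad_γ(t̂)·x) (for t̂ ∈ Ŝ_{r(γ)}) and ([γ], x) ◀ t̂ := ([γ], x·t̂) (for t̂ ∈ Ŝ_{s(γ)}) define a left action and a right action of the group bundle T := Ŝ = H⁰ on H along the moment maps p∘r and p∘s respectively; these actions commute and are free. (iii) With λ_{([γ],x)} := Ad_{γ⁻¹} and ρ_{([γ],x)} := Ad_γ, the following identities hold whenever defined: t▶u = u◀t for all units u of H; r(t▶η) = t▶r(η) and s(η◀t) = s(η)◀t; η◀t = λ_η(t)▶η; t▶η = η◀ρ_η(t); (γη)◀t = (γ◀λ_η(t))(η◀t); t▶(γη) = (t▶γ)(ρ_γ(t)▶η); (η◀t)⁻¹ = t▶η⁻¹; (t▶η)⁻¹ = η⁻¹◀t. That is, (H, T) satisfies the algebraic conditions of Assumption 5.1 of the paper. -/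
universe u v w

section WeylConstruction

open scoped Classical

variable {Hm : Type u} {U : Type v}

/-- The class `[γ] = γS` of `γ` in `G/S`. -/
def cls (Gg : RawGroupoid Hm U) (S : Set Hm) (γ : Hm) : Set Hm :=
  {η | ∃ a ∈ S, Gg.s γ = Gg.r a ∧ η = Gg.mul γ a}

/-- The isotropy fibre `S_u = {a ∈ S : r(a) = s(a) = u}`. -/
def sFib (Gg : RawGroupoid Hm U) (S : Set Hm) (u : U) : Set Hm :=
  {a | a ∈ S ∧ Gg.r a = u ∧ Gg.s a = u}

/-- `χ : Hm → Circle` represents a character of the abelian group `S_u`: it is multiplicative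
on `S_u` and (as a normalization making the representation unique) equal to `1` off `S_u`. -/
def IsCharOn (Gg : RawGroupoid Hm U) (S : Set Hm) (u : U) (χ : Hm → Circle) : Prop :=
  (∀ a ∈ sFib Gg S u, ∀ b ∈ sFib Gg S u, χ (Gg.mul a b) = χ a * χ b) ∧
    (∀ a, a ∉ sFib Gg S u → χ a = 1)

/-- The bundle `Ŝ = ⊔_u Ŝ_u` of character groups of the isotropy fibres of `S`. -/
def sHat (Gg : RawGroupoid Hm U) (S : Set Hm) : Type max u v :=
  {q : U × (Hm → Circle) // IsCharOn Gg S q.1 q.2}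

lemma isCharOn_one (Gg : RawGroupoid Hm U) (S : Set Hm) (u : U) :
    IsCharOn Gg S u (fun _ => 1) :=
  ⟨fun _ _ _ _ => by simp, fun _ _ => rfl⟩

/-- The trivial character of `S_u` (the identity of `Ŝ_u`). -/
noncomputable def eChar (Gg : RawGroupoid Hm U) (S : Set Hm) (u : U) : sHat Gg S :=
  ⟨(u, fun _ => 1), isCharOn_one Gg S u⟩

/-- The fibre map `p : Ŝ → G⁰`. -/
def pChar (Gg : RawGroupoid Hm U) (S : Set Hm) (x : sHat Gg S) : U := x.val.1

/-- Fibrewise (pointwise) multiplication of characters (junk if fibres differ). -/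
noncomputable def mulChar (Gg : RawGroupoid Hm U) (S : Set Hm) (x y : sHat Gg S) :
    sHat Gg S :=
  if h : x.val.1 = y.val.1 ∧
      IsCharOn Gg S x.val.1
        (fun a => if a ∈ sFib Gg S x.val.1 then x.val.2 a * y.val.2 a else 1) then
    ⟨(x.val.1, fun a => if a ∈ sFib Gg S x.val.1 then x.val.2 a * y.val.2 a else 1), h.2⟩
  else x

/-- Fibrewise (pointwise) inversion of characters. -/
noncomputable def invChar (Gg : RawGroupoid Hm U) (S : Set Hm) (x : sHat Gg S) : sHat Gg S :=
  if h : IsCharOn Gg S x.val.1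
      (fun a => if a ∈ sFib Gg S x.val.1 then (x.val.2 a)⁻¹ else 1) then
    ⟨(x.val.1, fun a => if a ∈ sFib Gg S x.val.1 then (x.val.2 a)⁻¹ else 1), h⟩
  else x

/-- `Ad_γ(t̂)(a) = t̂(γaγ⁻¹)`: for `t̂ ∈ Ŝ_{r(γ)}`, the character `Ad_γ(t̂) ∈ Ŝ_{s(γ)}`. -/
noncomputable def adFun (Gg : RawGroupoid Hm U) (S : Set Hm) (γ : Hm) (χ : Hm → Circle) :
    Hm → Circle :=
  fun a => if a ∈ sFib Gg S (Gg.s γ) then χ (Gg.mul (Gg.mul γ a) (Gg.inv γ)) else 1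

/-- `([γ].x)(a) = x(γ⁻¹aγ)`: the action of `G/S` on `Ŝ`, computed with a representative. -/
noncomputable def dotFun (Gg : RawGroupoid Hm U) (S : Set Hm) (γ : Hm) (χ : Hm → Circle) :
    Hm → Circle :=
  fun a => if a ∈ sFib Gg S (Gg.r γ) then χ (Gg.mul (Gg.mul (Gg.inv γ) a) γ) else 1

/-- `Ad_γ` as a map `Ŝ → Ŝ`. -/
noncomputable def adChar (Gg : RawGroupoid Hm U) (S : Set Hm) (γ : Hm) (t : sHat Gg S) :
    sHat Gg S :=
  if h : IsCharOn Gg S (Gg.s γ) (adFun Gg S γ t.val.2) then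
    ⟨(Gg.s γ, adFun Gg S γ t.val.2), h⟩
  else eChar Gg S (Gg.s γ)

/-- The arrow space of the action groupoid `H = (G/S) ⋉ Ŝ`: pairs `([γ], x)` with
`x ∈ Ŝ_{s(γ)}`. -/
def actGpd (Gg : RawGroupoid Hm U) (S : Set Hm) : Type max u v :=
  {q : Set Hm × sHat Gg S // ∃ γ : Hm, q.1 = cls Gg S γ ∧ q.2.val.1 = Gg.s γ}

/-- A representative `γ` of the class component of an element `([γ], x)` of `(G/S) ⋉ Ŝ`. -/
noncomputable def hwRep (Gg : RawGroupoid Hm U) (S : Set Hm) (q : actGpd Gg S) : Hm :=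
  q.property.choose

/-- The source `s([γ], x) = x` in `(G/S) ⋉ Ŝ`. -/
def wS (Gg : RawGroupoid Hm U) (S : Set Hm) (q : actGpd Gg S) : sHat Gg S := q.val.2

/-- The range `r([γ], x) = [γ].x` in `(G/S) ⋉ Ŝ`. -/
noncomputable def wR (Gg : RawGroupoid Hm U) (S : Set Hm) (q : actGpd Gg S) : sHat Gg S :=
  if h : IsCharOn Gg S (Gg.r (hwRep Gg S q)) (dotFun Gg S (hwRep Gg S q) q.val.2.val.2) then
    ⟨(Gg.r (hwRep Gg S q), dotFun Gg S (hwRep Gg S q) q.val.2.val.2), h⟩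
  else eChar Gg S (Gg.r (hwRep Gg S q))

/-- The unit of `(G/S) ⋉ Ŝ` at `x ∈ Ŝ`, namely `([p(x)], x)`. -/
def wUnit (Gg : RawGroupoid Hm U) (S : Set Hm) (x : sHat Gg S) : actGpd Gg S :=
  ⟨(cls Gg S (Gg.unit x.val.1), x), ⟨Gg.unit x.val.1, rfl, (Gg.s_unit x.val.1).symm⟩⟩

/-- The product of class sets. -/
def clsProd (Gg : RawGroupoid Hm U) (c d : Set Hm) : Set Hm :=
  {ξ | ∃ γ' ∈ c, ∃ η' ∈ d, Gg.s γ' = Gg.r η' ∧ ξ = Gg.mul γ' η'}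

/-- The product `([γ], [η].x)([η], x) = ([γη], x)` in `(G/S) ⋉ Ŝ` (junk value if not
composable). -/
noncomputable def wMul (Gg : RawGroupoid Hm U) (S : Set Hm) (q₁ q₂ : actGpd Gg S) :
    actGpd Gg S :=
  if h : wS Gg S q₁ = wR Gg S q₂ ∧
      ∃ γ : Hm, clsProd Gg q₁.val.1 q₂.val.1 = cls Gg S γ ∧ q₂.val.2.val.1 = Gg.s γ then
    ⟨(clsProd Gg q₁.val.1 q₂.val.1, q₂.val.2), h.2⟩
  else q₁

/-- The inverse `([γ], x)⁻¹ = ([γ⁻¹], [γ].x)` in `(G/S) ⋉ Ŝ`. -/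
noncomputable def wInv (Gg : RawGroupoid Hm U) (S : Set Hm) (q : actGpd Gg S) : actGpd Gg S :=
  if h : ∃ γ : Hm, Gg.inv '' q.val.1 = cls Gg S γ ∧ (wR Gg S q).val.1 = Gg.s γ then
    ⟨(Gg.inv '' q.val.1, wR Gg S q), h⟩
  else q

/-- The left action `t̂ ▶ ([γ], x) = ([γ], Ad_γ(t̂)·x)` of `T = Ŝ` on `(G/S) ⋉ Ŝ`. -/
noncomputable def wActL (Gg : RawGroupoid Hm U) (S : Set Hm) (t : sHat Gg S)
    (q : actGpd Gg S) : actGpd Gg S :=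
  if h : ∃ γ : Hm, q.val.1 = cls Gg S γ ∧
      (mulChar Gg S (adChar Gg S (hwRep Gg S q) t) q.val.2).val.1 = Gg.s γ then
    ⟨(q.val.1, mulChar Gg S (adChar Gg S (hwRep Gg S q) t) q.val.2), h⟩
  else q

/-- The right action `([γ], x) ◀ t̂ = ([γ], x·t̂)` of `T = Ŝ` on `(G/S) ⋉ Ŝ`. -/
noncomputable def wActR (Gg : RawGroupoid Hm U) (S : Set Hm) (q : actGpd Gg S)
    (t : sHat Gg S) : actGpd Gg S :=
  if h : ∃ γ : Hm, q.val.1 = cls Gg S γ ∧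
      (mulChar Gg S q.val.2 t).val.1 = Gg.s γ then
    ⟨(q.val.1, mulChar Gg S q.val.2 t), h⟩
  else q

/-- `λ_{([γ],x)} = Ad_{γ⁻¹}`. -/
noncomputable def wLam (Gg : RawGroupoid Hm U) (S : Set Hm) (q : actGpd Gg S)
    (t : sHat Gg S) : sHat Gg S :=
  adChar Gg S (Gg.inv (hwRep Gg S q)) t

/-- `ρ_{([γ],x)} = Ad_γ`. -/
noncomputable def wRho (Gg : RawGroupoid Hm U) (S : Set Hm) (q : actGpd Gg S)
    (t : sHat Gg S) : sHat Gg S :=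
  adChar Gg S (hwRep Gg S q) t

/-!
Every arrow of `(G/S) ⋉ Ŝ` is `([γ], x)` for a representative `γ`, and all structure maps are
computed from `γ`; normality of `S` gives `[γ][η] = [γη]` and `[γ]⁻¹ = [γ⁻¹]`. Independence of
the representative rests on one fact: for `a ∈ S` and `b ∈ S_{s(γ)}`, conjugating `b` by `γa` is
the same as conjugating it by `γ`, since `S_{s(γ)}` is abelian; so `Ad_γ` depends only on `[γ]`.
Every identity of Assumption 5.1 then reduces to `Ad_{γ'} ∘ Ad_γ = Ad_{γγ'}`, `Ad_{unit} = id`,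
multiplicativity of `Ad_γ`, and commutativity of the character groups `Ŝ_u`.
-/

namespace RawGroupoid

variable {H : Type*} {V : Type*} (G : RawGroupoid H V)

theorem inv_mul_cancel_left {g h : H} (hc : G.s g = G.r h) :
    G.mul (G.inv g) (G.mul g h) = h := by
  rw [← G.mul_assoc _ _ _ (G.s_inv g) hc, G.inv_mul, hc, G.unit_mul]

theorem mul_inv_cancel_left {g h : H} (hc : G.r g = G.r h) :
    G.mul g (G.mul (G.inv g) h) = h := by
  rw [← G.mul_assoc _ _ _ (G.r_inv g).symm (by rw [G.s_inv, hc]), G.mul_inv, hc, G.unit_mul]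

theorem inv_eq_of_mul_eq_unit {g h : H} (hc : G.s g = G.r h)
    (hm : G.mul g h = G.unit (G.r g)) : G.inv g = h := by
  rw [← G.inv_mul_cancel_left hc, hm, ← G.s_inv, G.mul_unit]

theorem inv_unit (x : V) : G.inv (G.unit x) = G.unit x := by
  refine G.inv_eq_of_mul_eq_unit (by rw [G.s_unit, G.r_unit]) ?_
  have h := G.mul_unit (G.unit x)
  rw [G.s_unit] at h
  rw [h, G.r_unit]

theorem inv_mul_rev {g h : H} (hc : G.s g = G.r h) :
    G.inv (G.mul g h) = G.mul (G.inv h) (G.inv g) := by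
  have hc' : G.s (G.inv h) = G.r (G.inv g) := by rw [G.s_inv, G.r_inv, hc]
  refine G.inv_eq_of_mul_eq_unit (by rw [G.s_mul _ _ hc, G.r_mul _ _ hc', G.r_inv]) ?_
  rw [G.mul_assoc _ _ _ hc (by rw [G.r_mul _ _ hc', G.r_inv]),
    G.mul_inv_cancel_left (by rw [G.r_inv, hc]), G.mul_inv, G.r_mul _ _ hc]

theorem conj_mul {γ a b : H} (ha : G.r a = G.s γ) (ha' : G.s a = G.s γ)
    (hb : G.r b = G.s γ) (hb' : G.s b = G.s γ) :
    G.mul (G.mul γ (G.mul a b)) (G.inv γ) =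
      G.mul (G.mul (G.mul γ a) (G.inv γ)) (G.mul (G.mul γ b) (G.inv γ)) := by
  -- right-associate both sides; the discharger checks composability by computing `r` and `s`
  simp (disch := simp [G.r_mul, G.s_mul, G.r_inv, G.s_inv, *]) only
    [G.mul_assoc, G.inv_mul_cancel_left]

theorem conj_conj {γ γ' a : H} (hc : G.s γ = G.r γ') (ha : G.r a = G.s γ')
    (ha' : G.s a = G.s γ') :
    G.mul (G.mul (G.mul γ γ') a) (G.inv (G.mul γ γ')) =
      G.mul (G.mul γ (G.mul (G.mul γ' a) (G.inv γ'))) (G.inv γ) := by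
  simp (disch := simp [G.r_mul, G.s_mul, G.r_inv, G.s_inv, *]) only
    [G.mul_assoc, G.inv_mul_rev]

theorem conj_unit {x : V} {a : H} (ha : G.r a = x) (ha' : G.s a = x) :
    G.mul (G.mul (G.unit x) a) (G.inv (G.unit x)) = a := by
  rw [G.inv_unit, ← ha, G.unit_mul, ha, ← ha', G.mul_unit]

theorem conj_mul_of_commute {γ a b : H} (ha : G.r a = G.s γ) (ha' : G.s a = G.s γ)
    (hb : G.r b = G.s γ) (hb' : G.s b = G.s γ) (hab : G.mul a b = G.mul b a) :
    G.mul (G.mul (G.mul γ a) b) (G.inv (G.mul γ a)) = G.mul (G.mul γ b) (G.inv γ) := by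
  have hcomm : G.mul (G.mul a b) (G.inv a) = b := by
    rw [hab, G.mul_assoc _ _ _ (by rw [hb', ha]) (by rw [G.r_inv]), G.mul_inv, ha, ← hb',
      G.mul_unit]
  rw [G.conj_conj ha.symm (by rw [hb, ha']) (by rw [hb', ha']), hcomm]

end RawGroupoid

structure IsWideNormalAbelian (Gg : RawGroupoid Hm U) (S : Set Hm) : Prop where
  r_eq_s : ∀ a ∈ S, Gg.r a = Gg.s a
  unit_mem : ∀ x : U, Gg.unit x ∈ S
  mul_mem : ∀ a b, a ∈ S → b ∈ S → Gg.s a = Gg.r b → Gg.mul a b ∈ S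
  inv_mem : ∀ a ∈ S, Gg.inv a ∈ S
  conj_mem : ∀ γ a, a ∈ S → Gg.r a = Gg.r γ → Gg.mul (Gg.mul (Gg.inv γ) a) γ ∈ S
  mul_comm : ∀ a b, a ∈ S → b ∈ S → Gg.s a = Gg.r b → Gg.r a = Gg.s b →
    Gg.mul a b = Gg.mul b a

variable {Gg : RawGroupoid Hm U} {S : Set Hm}

theorem IsWideNormalAbelian.mul_mul_inv_mem (hS : IsWideNormalAbelian Gg S) {γ a : Hm}
    (ha : a ∈ S) (hra : Gg.r a = Gg.s γ) : Gg.mul (Gg.mul γ a) (Gg.inv γ) ∈ S := by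
  simpa only [Gg.inv_inv] using hS.conj_mem (Gg.inv γ) a ha (by rw [Gg.r_inv, hra])

theorem mem_cls_self (hS : IsWideNormalAbelian Gg S) (γ : Hm) : γ ∈ cls Gg S γ :=
  ⟨Gg.unit (Gg.s γ), hS.unit_mem _, (Gg.r_unit _).symm, (Gg.mul_unit γ).symm⟩

theorem s_eq_of_mem_cls (hS : IsWideNormalAbelian Gg S) {γ η : Hm} (h : η ∈ cls Gg S γ) :
    Gg.s η = Gg.s γ := by
  obtain ⟨a, haS, hra, rfl⟩ := h
  rw [Gg.s_mul _ _ hra, ← hS.r_eq_s a haS, ← hra]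

theorem inv_mem_cls_inv (hS : IsWideNormalAbelian Gg S) {γ η : Hm} (h : η ∈ cls Gg S γ) :
    Gg.inv η ∈ cls Gg S (Gg.inv γ) := by
  obtain ⟨a, haS, hra, rfl⟩ := h
  have hsa : Gg.s a = Gg.s γ := by rw [← hS.r_eq_s a haS, ← hra]
  refine ⟨Gg.mul (Gg.mul γ (Gg.inv a)) (Gg.inv γ),
    hS.mul_mul_inv_mem (hS.inv_mem a haS) (by rw [Gg.r_inv, hsa]), ?_, ?_⟩ <;>
  simp (disch := simp [Gg.r_mul, Gg.s_mul, Gg.r_inv, Gg.s_inv, *]) only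
    [Gg.r_mul, Gg.s_inv, Gg.inv_mul_rev, Gg.mul_assoc, Gg.inv_mul_cancel_left]

theorem image_inv_cls (hS : IsWideNormalAbelian Gg S) (γ : Hm) :
    Gg.inv '' cls Gg S γ = cls Gg S (Gg.inv γ) := by
  ext ξ
  constructor
  · rintro ⟨η, hη, rfl⟩
    exact inv_mem_cls_inv hS hη
  · intro hξ
    refine ⟨Gg.inv ξ, ?_, Gg.inv_inv ξ⟩
    simpa only [Gg.inv_inv] using inv_mem_cls_inv hS hξ

theorem clsProd_cls (hS : IsWideNormalAbelian Gg S) {γ η : Hm} (hc : Gg.s γ = Gg.r η) :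
    clsProd Gg (cls Gg S γ) (cls Gg S η) = cls Gg S (Gg.mul γ η) := by
  ext ξ
  constructor
  · rintro ⟨γ', ⟨a, haS, hra, rfl⟩, η', ⟨b, hbS, hrb, rfl⟩, -, rfl⟩
    have hsa : Gg.s a = Gg.s γ := by rw [← hS.r_eq_s a haS, ← hra]
    have hsb : Gg.s b = Gg.s η := by rw [← hS.r_eq_s b hbS, ← hrb]
    have hc₁ : Gg.s (Gg.inv η) = Gg.r a := by rw [Gg.s_inv, ← hc, hra]
    have hc₂ : Gg.s (Gg.mul (Gg.inv η) a) = Gg.r η := by rw [Gg.s_mul _ _ hc₁, hsa, hc]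
    have hc₃ : Gg.s (Gg.mul (Gg.mul (Gg.inv η) a) η) = Gg.r b := by rw [Gg.s_mul _ _ hc₂, hrb]
    -- `(γa)(ηb) = (γη)((η⁻¹aη)b)` and `η⁻¹aη ∈ S` by normality
    refine ⟨Gg.mul (Gg.mul (Gg.mul (Gg.inv η) a) η) b,
      hS.mul_mem _ _ (hS.conj_mem η a haS (by rw [← hra, hc])) hbS hc₃, ?_, ?_⟩
    · rw [Gg.s_mul _ _ hc, Gg.r_mul _ _ hc₃, Gg.r_mul _ _ hc₂, Gg.r_mul _ _ hc₁, Gg.r_inv]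
    · simp (disch := simp (maxDischargeDepth := 5) [Gg.r_mul, Gg.s_mul, Gg.r_inv, Gg.s_inv, hsa,
        hsb, hc.symm, hra.symm, hrb.symm]) only [Gg.mul_assoc, Gg.mul_inv_cancel_left]
  · rintro ⟨c, hcS, hrc, rfl⟩
    rw [Gg.s_mul _ _ hc] at hrc
    exact ⟨γ, mem_cls_self hS γ, Gg.mul η c, ⟨c, hcS, hrc, rfl⟩,
      by rw [Gg.r_mul _ _ hrc, hc], Gg.mul_assoc γ η c hc hrc⟩

theorem mul_mem_sFib (hS : IsWideNormalAbelian Gg S) {u : U} {a b : Hm}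
    (ha : a ∈ sFib Gg S u) (hb : b ∈ sFib Gg S u) : Gg.mul a b ∈ sFib Gg S u := by
  obtain ⟨haS, hra, hsa⟩ := ha
  obtain ⟨hbS, hrb, hsb⟩ := hb
  have hab : Gg.s a = Gg.r b := by rw [hsa, hrb]
  exact ⟨hS.mul_mem a b haS hbS hab, by rw [Gg.r_mul a b hab, hra],
    by rw [Gg.s_mul a b hab, hsb]⟩

theorem eq_of_mem_sFib {u u' : U} {a : Hm} (h : a ∈ sFib Gg S u) (h' : a ∈ sFib Gg S u') :
    u = u' :=
  h.2.1.symm.trans h'.2.1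

theorem conj_mem_sFib (hS : IsWideNormalAbelian Gg S) {γ a : Hm} (ha : a ∈ sFib Gg S (Gg.s γ)) :
    Gg.mul (Gg.mul γ a) (Gg.inv γ) ∈ sFib Gg S (Gg.r γ) := by
  obtain ⟨haS, hra, hsa⟩ := ha
  have hc : Gg.s (Gg.mul γ a) = Gg.r (Gg.inv γ) := by rw [Gg.s_mul _ _ hra.symm, hsa, Gg.r_inv]
  exact ⟨hS.mul_mul_inv_mem haS hra, by rw [Gg.r_mul _ _ hc, Gg.r_mul _ _ hra.symm],
    by rw [Gg.s_mul _ _ hc, Gg.s_inv]⟩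

theorem sHat.apply_of_notMem (x : sHat Gg S) {a : Hm} (h : a ∉ sFib Gg S x.val.1) :
    x.val.2 a = 1 :=
  x.2.2 a h

theorem isCharOn_mul (hS : IsWideNormalAbelian Gg S) (x y : sHat Gg S) (h : x.val.1 = y.val.1) :
    IsCharOn Gg S x.val.1
      (fun a => if a ∈ sFib Gg S x.val.1 then x.val.2 a * y.val.2 a else 1) := by
  refine ⟨fun a ha b hb => ?_, fun a ha => if_neg ha⟩
  simp only [if_pos ha, if_pos hb, if_pos (mul_mem_sFib hS ha hb), x.2.1 a ha b hb,
    y.2.1 a (h ▸ ha) b (h ▸ hb), mul_mul_mul_comm]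

-- `sHat` and `actGpd` are semireducible, so `rw [dif_pos _]` under `Subtype.val` does not
-- type-check; the branches of these `dite`s are read off with `congrArg` and `apply_dite` instead.
theorem mulChar_val (hS : IsWideNormalAbelian Gg S) (x y : sHat Gg S) (h : x.val.1 = y.val.1) :
    (mulChar Gg S x y).val =
      (x.val.1, fun a => if a ∈ sFib Gg S x.val.1 then x.val.2 a * y.val.2 a else 1) :=
  congrArg Subtype.val (dif_pos ⟨h, isCharOn_mul hS x y h⟩)

theorem pChar_mulChar (x y : sHat Gg S) : (mulChar Gg S x y).val.1 = x.val.1 :=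
  (apply_dite (fun z : sHat Gg S => z.val.1) _ _ _).trans (by split <;> rfl)

theorem mulChar_comm (hS : IsWideNormalAbelian Gg S) {x y : sHat Gg S} (h : x.val.1 = y.val.1) :
    mulChar Gg S x y = mulChar Gg S y x := by
  refine Subtype.ext ?_
  rw [mulChar_val hS x y h, mulChar_val hS y x h.symm, h]
  simp only [mul_comm]

theorem mulChar_assoc (hS : IsWideNormalAbelian Gg S) {x y z : sHat Gg S}
    (hxy : x.val.1 = y.val.1) (hyz : y.val.1 = z.val.1) :
    mulChar Gg S (mulChar Gg S x y) z = mulChar Gg S x (mulChar Gg S y z) := by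
  have hxy_z : (mulChar Gg S x y).val.1 = z.val.1 := by rw [pChar_mulChar, hxy, hyz]
  have hx_yz : x.val.1 = (mulChar Gg S y z).val.1 := by rw [pChar_mulChar, hxy]
  refine Subtype.ext ?_
  rw [mulChar_val hS _ z hxy_z, mulChar_val hS x _ hx_yz, mulChar_val hS x y hxy,
    mulChar_val hS y z hyz]
  refine Prod.ext rfl (funext fun a => ?_)
  by_cases ha : a ∈ sFib Gg S x.val.1
  · simp [ha, ← hxy, mul_assoc]
  · simp [ha]

theorem eChar_mulChar (hS : IsWideNormalAbelian Gg S) (x : sHat Gg S) :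
    mulChar Gg S (eChar Gg S x.val.1) x = x := by
  refine Subtype.ext ?_
  rw [mulChar_val hS (eChar Gg S x.val.1) x rfl]
  refine Prod.ext rfl (funext fun a => ?_)
  by_cases ha : a ∈ sFib Gg S x.val.1
  · simp [eChar, ha]
  · simp [eChar, ha, x.apply_of_notMem ha]

theorem isCharOn_inv (hS : IsWideNormalAbelian Gg S) (x : sHat Gg S) :
    IsCharOn Gg S x.val.1 (fun a => if a ∈ sFib Gg S x.val.1 then (x.val.2 a)⁻¹ else 1) := by
  refine ⟨fun a ha b hb => ?_, fun a ha => if_neg ha⟩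
  simp only [if_pos ha, if_pos hb, if_pos (mul_mem_sFib hS ha hb), x.2.1 a ha b hb, mul_inv]

theorem pChar_invChar (x : sHat Gg S) : (invChar Gg S x).val.1 = x.val.1 :=
  (apply_dite (fun z : sHat Gg S => z.val.1) _ _ _).trans (by split <;> rfl)

theorem invChar_mulChar (hS : IsWideNormalAbelian Gg S) (x : sHat Gg S) :
    mulChar Gg S (invChar Gg S x) x = eChar Gg S x.val.1 := by
  refine Subtype.ext ?_
  have hinv : (invChar Gg S x).val =
      (x.val.1, fun a => if a ∈ sFib Gg S x.val.1 then (x.val.2 a)⁻¹ else 1) :=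
    congrArg Subtype.val (dif_pos (isCharOn_inv hS x))
  rw [mulChar_val hS _ x (pChar_invChar x), hinv]
  refine Prod.ext rfl (funext fun a => ?_)
  by_cases ha : a ∈ sFib Gg S x.val.1 <;> simp [eChar, ha]

theorem eq_eChar_of_mulChar_eq_right (hS : IsWideNormalAbelian Gg S) {x t : sHat Gg S}
    (h : x.val.1 = t.val.1) (he : mulChar Gg S x t = x) : t = eChar Gg S x.val.1 := by
  have hv := congrArg (fun y : sHat Gg S => y.val.2) he
  simp only [mulChar_val hS x t h] at hv
  refine Subtype.ext (Prod.ext h.symm (funext fun a => ?_))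
  by_cases ha : a ∈ sFib Gg S x.val.1
  · simpa [ha, eChar] using congrFun hv a
  · exact t.apply_of_notMem (h ▸ ha)

theorem isCharOn_adFun (hS : IsWideNormalAbelian Gg S) (γ : Hm) (t : sHat Gg S) :
    IsCharOn Gg S (Gg.s γ) (adFun Gg S γ t.val.2) := by
  refine ⟨fun a ha b hb => ?_, fun a ha => if_neg ha⟩
  have hab := mul_mem_sFib hS ha hb
  simp only [adFun, if_pos ha, if_pos hb, if_pos hab,
    Gg.conj_mul ha.2.1 ha.2.2 hb.2.1 hb.2.2]
  by_cases ht : t.val.1 = Gg.r γ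
  · exact t.2.1 _ (ht ▸ conj_mem_sFib hS ha) _ (ht ▸ conj_mem_sFib hS hb)
  · have hnot : ∀ c ∈ sFib Gg S (Gg.r γ), c ∉ sFib Gg S t.val.1 :=
      fun c hc hc' => ht (eq_of_mem_sFib hc' hc)
    rw [t.apply_of_notMem (hnot _ (conj_mem_sFib hS ha)),
      t.apply_of_notMem (hnot _ (conj_mem_sFib hS hb)),
      t.apply_of_notMem (hnot _ (mul_mem_sFib hS (conj_mem_sFib hS ha) (conj_mem_sFib hS hb))),
      one_mul]

theorem adChar_val (hS : IsWideNormalAbelian Gg S) (γ : Hm) (t : sHat Gg S) :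
    (adChar Gg S γ t).val = (Gg.s γ, adFun Gg S γ t.val.2) :=
  congrArg Subtype.val (dif_pos (isCharOn_adFun hS γ t))

theorem pChar_adChar (γ : Hm) (t : sHat Gg S) : (adChar Gg S γ t).val.1 = Gg.s γ :=
  (apply_dite (fun z : sHat Gg S => z.val.1) _ _ _).trans (by split <;> rfl)

theorem adFun_eq_of_mem_cls (hS : IsWideNormalAbelian Gg S) {γ η : Hm} (h : η ∈ cls Gg S γ)
    (χ : Hm → Circle) : adFun Gg S η χ = adFun Gg S γ χ := by
  funext b
  unfold adFun
  rw [s_eq_of_mem_cls hS h]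
  split_ifs with hb
  · obtain ⟨a, haS, hra, rfl⟩ := h
    have hsa : Gg.s a = Gg.s γ := by rw [← hS.r_eq_s a haS, ← hra]
    rw [Gg.conj_mul_of_commute hra.symm hsa hb.2.1 hb.2.2
      (hS.mul_comm a b haS hb.1 (by rw [hsa, hb.2.1]) (by rw [← hra, hb.2.2]))]
  · rfl

theorem dotFun_eq_adFun_inv (γ : Hm) (χ : Hm → Circle) :
    dotFun Gg S γ χ = adFun Gg S (Gg.inv γ) χ := by
  funext a
  simp only [dotFun, adFun, Gg.s_inv, Gg.inv_inv]

theorem dotFun_eq_of_mem_cls (hS : IsWideNormalAbelian Gg S) {γ η : Hm} (h : η ∈ cls Gg S γ)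
    (χ : Hm → Circle) : dotFun Gg S η χ = dotFun Gg S γ χ := by
  rw [dotFun_eq_adFun_inv, dotFun_eq_adFun_inv, adFun_eq_of_mem_cls hS (inv_mem_cls_inv hS h)]

theorem adChar_eq_of_mem_cls (hS : IsWideNormalAbelian Gg S) {γ η : Hm} (h : η ∈ cls Gg S γ)
    (t : sHat Gg S) : adChar Gg S η t = adChar Gg S γ t := by
  refine Subtype.ext ?_
  rw [adChar_val hS η t, adChar_val hS γ t, s_eq_of_mem_cls hS h, adFun_eq_of_mem_cls hS h]

theorem adChar_adChar (hS : IsWideNormalAbelian Gg S) {γ γ' : Hm} (hc : Gg.s γ = Gg.r γ')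
    (t : sHat Gg S) : adChar Gg S γ' (adChar Gg S γ t) = adChar Gg S (Gg.mul γ γ') t := by
  refine Subtype.ext ?_
  rw [adChar_val hS γ' _, adChar_val hS (Gg.mul γ γ') t, adChar_val hS γ t, Gg.s_mul _ _ hc]
  refine Prod.ext rfl (funext fun a => ?_)
  simp only [adFun, Gg.s_mul _ _ hc]
  split_ifs with ha hconj
  · exact congrArg _ (Gg.conj_conj hc ha.2.1 ha.2.2).symm
  · exact absurd (hc ▸ conj_mem_sFib hS ha) hconj
  · rfl

theorem adChar_unit (hS : IsWideNormalAbelian Gg S) {u : U} {t : sHat Gg S} (h : t.val.1 = u) :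
    adChar Gg S (Gg.unit u) t = t := by
  refine Subtype.ext ?_
  rw [adChar_val hS]
  refine Prod.ext (by rw [Gg.s_unit, h]) (funext fun a => ?_)
  simp only [adFun, Gg.s_unit]
  split_ifs with ha
  · rw [Gg.conj_unit ha.2.1 ha.2.2]
  · rw [t.apply_of_notMem (h ▸ ha)]

theorem adChar_inv_adChar (hS : IsWideNormalAbelian Gg S) {γ : Hm} {t : sHat Gg S}
    (h : t.val.1 = Gg.r γ) : adChar Gg S (Gg.inv γ) (adChar Gg S γ t) = t := by
  rw [adChar_adChar hS (Gg.r_inv γ).symm, Gg.mul_inv, adChar_unit hS h]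

theorem adChar_adChar_inv (hS : IsWideNormalAbelian Gg S) {γ : Hm} {t : sHat Gg S}
    (h : t.val.1 = Gg.s γ) : adChar Gg S γ (adChar Gg S (Gg.inv γ) t) = t := by
  simpa only [Gg.inv_inv] using adChar_inv_adChar hS (γ := Gg.inv γ) (by rwa [Gg.r_inv])

theorem adChar_eChar (hS : IsWideNormalAbelian Gg S) (γ : Hm) (u : U) :
    adChar Gg S γ (eChar Gg S u) = eChar Gg S (Gg.s γ) := by
  refine Subtype.ext ?_
  rw [adChar_val hS]
  refine Prod.ext rfl (funext fun a => ?_)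
  simp only [adFun, eChar, ite_self]

theorem adChar_mulChar (hS : IsWideNormalAbelian Gg S) (γ : Hm) {t t' : sHat Gg S}
    (h : t.val.1 = t'.val.1) :
    adChar Gg S γ (mulChar Gg S t t') = mulChar Gg S (adChar Gg S γ t) (adChar Gg S γ t') := by
  have hp : (adChar Gg S γ t).val.1 = (adChar Gg S γ t').val.1 := by
    rw [pChar_adChar, pChar_adChar]
  refine Subtype.ext ?_
  rw [adChar_val hS γ (mulChar Gg S t t'), mulChar_val hS _ _ hp, adChar_val hS γ t,
    adChar_val hS γ t', mulChar_val hS t t' h]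
  refine Prod.ext rfl (funext fun a => ?_)
  simp only [adFun]
  split_ifs with ha hc <;> try rfl
  rw [t.apply_of_notMem hc, t'.apply_of_notMem (h ▸ hc), one_mul]

theorem hwRep_spec (q : actGpd Gg S) :
    q.val.1 = cls Gg S (hwRep Gg S q) ∧ q.val.2.val.1 = Gg.s (hwRep Gg S q) :=
  q.property.choose_spec

theorem hwRep_mem_cls (hS : IsWideNormalAbelian Gg S) {q : actGpd Gg S} {γ : Hm}
    (h : q.val.1 = cls Gg S γ) : hwRep Gg S q ∈ cls Gg S γ := by
  rw [← h, (hwRep_spec q).1]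
  exact mem_cls_self hS _

theorem pChar_snd_eq_s (hS : IsWideNormalAbelian Gg S) {q : actGpd Gg S} {γ : Hm}
    (h : q.val.1 = cls Gg S γ) : q.val.2.val.1 = Gg.s γ := by
  rw [(hwRep_spec q).2, s_eq_of_mem_cls hS (hwRep_mem_cls hS h)]

theorem wR_eq_adChar_inv (hS : IsWideNormalAbelian Gg S) {q : actGpd Gg S} {γ : Hm}
    (h : q.val.1 = cls Gg S γ) : wR Gg S q = adChar Gg S (Gg.inv γ) q.val.2 := by
  have hrep := inv_mem_cls_inv hS (hwRep_mem_cls hS h)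
  have hchar : IsCharOn Gg S (Gg.r (hwRep Gg S q))
      (dotFun Gg S (hwRep Gg S q) q.val.2.val.2) := by
    simpa only [dotFun_eq_adFun_inv, Gg.s_inv] using
      isCharOn_adFun hS (Gg.inv (hwRep Gg S q)) q.val.2
  refine Subtype.ext ?_
  rw [← adChar_eq_of_mem_cls hS hrep, adChar_val hS, Gg.s_inv, ← dotFun_eq_adFun_inv]
  exact congrArg Subtype.val (dif_pos hchar)

theorem pChar_wR (hS : IsWideNormalAbelian Gg S) {q : actGpd Gg S} {γ : Hm}
    (h : q.val.1 = cls Gg S γ) : (wR Gg S q).val.1 = Gg.r γ := by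
  rw [wR_eq_adChar_inv hS h, pChar_adChar, Gg.s_inv]

theorem s_eq_r_of_wS_eq_wR (hS : IsWideNormalAbelian Gg S) {q₁ q₂ : actGpd Gg S} {γ₁ γ₂ : Hm}
    (h₁ : q₁.val.1 = cls Gg S γ₁) (h₂ : q₂.val.1 = cls Gg S γ₂)
    (h : wS Gg S q₁ = wR Gg S q₂) : Gg.s γ₁ = Gg.r γ₂ := by
  rw [← pChar_snd_eq_s hS h₁, ← pChar_wR hS h₂]
  exact congrArg (fun x : sHat Gg S => x.val.1) h

theorem wMul_val (hS : IsWideNormalAbelian Gg S) {q₁ q₂ : actGpd Gg S} {γ₁ γ₂ : Hm}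
    (h₁ : q₁.val.1 = cls Gg S γ₁) (h₂ : q₂.val.1 = cls Gg S γ₂)
    (h : wS Gg S q₁ = wR Gg S q₂) :
    (wMul Gg S q₁ q₂).val = (cls Gg S (Gg.mul γ₁ γ₂), q₂.val.2) := by
  have hc := s_eq_r_of_wS_eq_wR hS h₁ h₂ h
  have hprod : clsProd Gg q₁.val.1 q₂.val.1 = cls Gg S (Gg.mul γ₁ γ₂) := by
    rw [h₁, h₂, clsProd_cls hS hc]
  have hfib : q₂.val.2.val.1 = Gg.s (Gg.mul γ₁ γ₂) := by
    rw [Gg.s_mul _ _ hc, pChar_snd_eq_s hS h₂]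
  rw [← hprod]
  exact congrArg Subtype.val (dif_pos ⟨h, Gg.mul γ₁ γ₂, hprod, hfib⟩)

theorem wMul_fst (hS : IsWideNormalAbelian Gg S) {q₁ q₂ : actGpd Gg S} {γ₁ γ₂ : Hm}
    (h₁ : q₁.val.1 = cls Gg S γ₁) (h₂ : q₂.val.1 = cls Gg S γ₂)
    (h : wS Gg S q₁ = wR Gg S q₂) :
    (wMul Gg S q₁ q₂).val.1 = cls Gg S (Gg.mul γ₁ γ₂) :=
  (congrArg Prod.fst (wMul_val hS h₁ h₂ h)).trans rfl

theorem wMul_snd (hS : IsWideNormalAbelian Gg S) {q₁ q₂ : actGpd Gg S}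
    (h : wS Gg S q₁ = wR Gg S q₂) : (wMul Gg S q₁ q₂).val.2 = q₂.val.2 :=
  (congrArg Prod.snd (wMul_val hS (hwRep_spec q₁).1 (hwRep_spec q₂).1 h)).trans rfl

theorem wInv_val (hS : IsWideNormalAbelian Gg S) {q : actGpd Gg S} {γ : Hm}
    (h : q.val.1 = cls Gg S γ) : (wInv Gg S q).val = (cls Gg S (Gg.inv γ), wR Gg S q) := by
  have himg : Gg.inv '' q.val.1 = cls Gg S (Gg.inv γ) := by rw [h, image_inv_cls hS]
  have hfib : (wR Gg S q).val.1 = Gg.s (Gg.inv γ) := by rw [pChar_wR hS h, Gg.s_inv]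
  rw [← himg]
  exact congrArg Subtype.val (dif_pos ⟨Gg.inv γ, himg, hfib⟩)

theorem wInv_fst (hS : IsWideNormalAbelian Gg S) {q : actGpd Gg S} {γ : Hm}
    (h : q.val.1 = cls Gg S γ) : (wInv Gg S q).val.1 = cls Gg S (Gg.inv γ) :=
  (congrArg Prod.fst (wInv_val hS h)).trans rfl

theorem wInv_snd (hS : IsWideNormalAbelian Gg S) (q : actGpd Gg S) :
    (wInv Gg S q).val.2 = wR Gg S q :=
  (congrArg Prod.snd (wInv_val hS (hwRep_spec q).1)).trans rfl

theorem wActL_fst (t : sHat Gg S) (q : actGpd Gg S) : (wActL Gg S t q).val.1 = q.val.1 :=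
  (apply_dite (fun z : actGpd Gg S => z.val.1) _ _ _).trans (by split <;> rfl)

theorem wActL_snd (hS : IsWideNormalAbelian Gg S) {q : actGpd Gg S} {γ : Hm}
    (h : q.val.1 = cls Gg S γ) (t : sHat Gg S) :
    (wActL Gg S t q).val.2 = mulChar Gg S (adChar Gg S γ t) q.val.2 := by
  rw [← adChar_eq_of_mem_cls hS (hwRep_mem_cls hS h)]
  exact congrArg (fun z : actGpd Gg S => z.val.2) (dif_pos ⟨hwRep Gg S q, (hwRep_spec q).1,
    by rw [pChar_mulChar, pChar_adChar]⟩)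

theorem wActR_fst (q : actGpd Gg S) (t : sHat Gg S) : (wActR Gg S q t).val.1 = q.val.1 :=
  (apply_dite (fun z : actGpd Gg S => z.val.1) _ _ _).trans (by split <;> rfl)

theorem wActR_snd (q : actGpd Gg S) (t : sHat Gg S) :
    (wActR Gg S q t).val.2 = mulChar Gg S q.val.2 t :=
  congrArg (fun z : actGpd Gg S => z.val.2) (dif_pos ⟨hwRep Gg S q, (hwRep_spec q).1,
    by rw [pChar_mulChar, (hwRep_spec q).2]⟩)

theorem wLam_eq (hS : IsWideNormalAbelian Gg S) {q : actGpd Gg S} {γ : Hm}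
    (h : q.val.1 = cls Gg S γ) (t : sHat Gg S) : wLam Gg S q t = adChar Gg S (Gg.inv γ) t :=
  adChar_eq_of_mem_cls hS (inv_mem_cls_inv hS (hwRep_mem_cls hS h)) t

theorem wRho_eq (hS : IsWideNormalAbelian Gg S) {q : actGpd Gg S} {γ : Hm}
    (h : q.val.1 = cls Gg S γ) (t : sHat Gg S) : wRho Gg S q t = adChar Gg S γ t :=
  adChar_eq_of_mem_cls hS (hwRep_mem_cls hS h) t

theorem wR_wUnit (hS : IsWideNormalAbelian Gg S) (x : sHat Gg S) : wR Gg S (wUnit Gg S x) = x := by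
  rw [wR_eq_adChar_inv hS (rfl : (wUnit Gg S x).val.1 = _), Gg.inv_unit]
  exact adChar_unit hS rfl

theorem wR_wMul (hS : IsWideNormalAbelian Gg S) (q₁ q₂ : actGpd Gg S)
    (h : wS Gg S q₁ = wR Gg S q₂) : wR Gg S (wMul Gg S q₁ q₂) = wR Gg S q₁ := by
  obtain ⟨h₁, -⟩ := hwRep_spec q₁
  obtain ⟨h₂, -⟩ := hwRep_spec q₂
  have hc := s_eq_r_of_wS_eq_wR hS h₁ h₂ h
  rw [wR_eq_adChar_inv hS (wMul_fst hS h₁ h₂ h), wMul_snd hS h, Gg.inv_mul_rev hc,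
    ← adChar_adChar hS (by rw [Gg.s_inv, Gg.r_inv, hc]), ← wR_eq_adChar_inv hS h₂, ← h,
    wR_eq_adChar_inv hS h₁]
  rfl

theorem wR_wInv (hS : IsWideNormalAbelian Gg S) (q : actGpd Gg S) :
    wR Gg S (wInv Gg S q) = wS Gg S q := by
  obtain ⟨h, hs⟩ := hwRep_spec q
  rw [wR_eq_adChar_inv hS (wInv_fst hS h), wInv_snd hS, Gg.inv_inv,
    wR_eq_adChar_inv hS h, adChar_adChar hS (Gg.s_inv _), Gg.inv_mul]
  exact adChar_unit hS hs

theorem wInv_wInv (hS : IsWideNormalAbelian Gg S) (q : actGpd Gg S) :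
    wInv Gg S (wInv Gg S q) = q := by
  obtain ⟨h, -⟩ := hwRep_spec q
  refine Subtype.ext ?_
  rw [wInv_val hS (wInv_fst hS h), Gg.inv_inv, wR_wInv hS q, ← h]
  rfl

theorem wMul_assoc (hS : IsWideNormalAbelian Gg S) (q₁ q₂ q₃ : actGpd Gg S)
    (h₁₂ : wS Gg S q₁ = wR Gg S q₂) (h₂₃ : wS Gg S q₂ = wR Gg S q₃) :
    wMul Gg S (wMul Gg S q₁ q₂) q₃ = wMul Gg S q₁ (wMul Gg S q₂ q₃) := by
  obtain ⟨h₁, -⟩ := hwRep_spec q₁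
  obtain ⟨h₂, -⟩ := hwRep_spec q₂
  obtain ⟨h₃, -⟩ := hwRep_spec q₃
  refine Subtype.ext ?_
  have hc₁₂ := s_eq_r_of_wS_eq_wR hS h₁ h₂ h₁₂
  have hc₂₃ := s_eq_r_of_wS_eq_wR hS h₂ h₃ h₂₃
  rw [wMul_val hS (wMul_fst hS h₁ h₂ h₁₂) h₃ ((wMul_snd hS h₁₂).trans h₂₃),
    wMul_val hS h₁ (wMul_fst hS h₂ h₃ h₂₃) (h₁₂.trans (wR_wMul hS q₂ q₃ h₂₃).symm),
    Gg.mul_assoc _ _ _ hc₁₂ hc₂₃, wMul_snd hS h₂₃]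

theorem wUnit_wMul (hS : IsWideNormalAbelian Gg S) (q : actGpd Gg S) :
    wMul Gg S (wUnit Gg S (wR Gg S q)) q = q := by
  obtain ⟨h, -⟩ := hwRep_spec q
  have hu : (wUnit Gg S (wR Gg S q)).val.1 = cls Gg S (Gg.unit (Gg.r (hwRep Gg S q))) := by
    rw [← pChar_wR hS h]
    rfl
  refine Subtype.ext ?_
  rw [wMul_val hS hu h rfl, Gg.unit_mul, ← h]

theorem wMul_wUnit (hS : IsWideNormalAbelian Gg S) (q : actGpd Gg S) :
    wMul Gg S q (wUnit Gg S (wS Gg S q)) = q := by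
  obtain ⟨h, hs⟩ := hwRep_spec q
  have hu : (wUnit Gg S (wS Gg S q)).val.1 = cls Gg S (Gg.unit (Gg.s (hwRep Gg S q))) := by
    rw [← hs]
    rfl
  refine Subtype.ext ?_
  rw [wMul_val hS h hu (wR_wUnit hS _).symm, Gg.mul_unit, ← h]
  rfl

theorem wInv_wMul_self (hS : IsWideNormalAbelian Gg S) (q : actGpd Gg S) :
    wMul Gg S (wInv Gg S q) q = wUnit Gg S (wS Gg S q) := by
  obtain ⟨h, hs⟩ := hwRep_spec q
  refine Subtype.ext ?_
  rw [wMul_val hS (wInv_fst hS h) h (wInv_snd hS q), Gg.inv_mul, ← hs]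
  rfl

theorem wMul_wInv_self (hS : IsWideNormalAbelian Gg S) (q : actGpd Gg S) :
    wMul Gg S q (wInv Gg S q) = wUnit Gg S (wR Gg S q) := by
  obtain ⟨h, -⟩ := hwRep_spec q
  refine Subtype.ext ?_
  rw [wMul_val hS h (wInv_fst hS h) (wR_wInv hS q).symm, Gg.mul_inv, ← pChar_wR hS h,
    wInv_snd hS]
  rfl

noncomputable def actionGroupoid (hS : IsWideNormalAbelian Gg S) :
    RawGroupoid (actGpd Gg S) (sHat Gg S) where
  r := wR Gg S
  s := wS Gg S
  mul := wMul Gg S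
  inv := wInv Gg S
  unit := wUnit Gg S
  r_unit := wR_wUnit hS
  s_unit _ := rfl
  r_mul := wR_wMul hS
  s_mul _ _ := wMul_snd hS
  r_inv := wR_wInv hS
  s_inv := wInv_snd hS
  inv_inv := wInv_wInv hS
  mul_assoc := wMul_assoc hS
  unit_mul := wUnit_wMul hS
  mul_unit := wMul_wUnit hS
  inv_mul := wInv_wMul_self hS
  mul_inv := wMul_wInv_self hS

noncomputable def charBundle (hS : IsWideNormalAbelian Gg S) : AbGroupBundle (sHat Gg S) U where
  p := pChar Gg S
  p_surj u := ⟨eChar Gg S u, rfl⟩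
  e := eChar Gg S
  bmul := mulChar Gg S
  binv := invChar Gg S
  p_e _ := rfl
  p_bmul s t h := (pChar_mulChar s t).trans h
  p_binv := pChar_invChar
  bmul_assoc _ _ _ := mulChar_assoc hS
  bmul_comm _ _ := mulChar_comm hS
  e_bmul := eChar_mulChar hS
  binv_bmul := invChar_mulChar hS

theorem wR_wActL (hS : IsWideNormalAbelian Gg S) {q : actGpd Gg S} {γ : Hm}
    (h : q.val.1 = cls Gg S γ) {t : sHat Gg S} (ht : t.val.1 = Gg.r γ) :
    wR Gg S (wActL Gg S t q) = mulChar Gg S t (wR Gg S q) := by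
  rw [wR_eq_adChar_inv hS ((wActL_fst t q).trans h), wActL_snd hS h,
    adChar_mulChar hS _ (by rw [pChar_adChar, pChar_snd_eq_s hS h]),
    adChar_inv_adChar hS ht, ← wR_eq_adChar_inv hS h]

theorem wActL_eChar (hS : IsWideNormalAbelian Gg S) (q : actGpd Gg S) :
    wActL Gg S (eChar Gg S (wR Gg S q).val.1) q = q := by
  obtain ⟨h, hs⟩ := hwRep_spec q
  refine Subtype.ext (Prod.ext (wActL_fst _ q) ?_)
  rw [wActL_snd hS h, adChar_eChar hS, ← hs, eChar_mulChar hS]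

theorem wActL_mulChar (hS : IsWideNormalAbelian Gg S) {t t' : sHat Gg S} {q : actGpd Gg S}
    (htt' : t.val.1 = t'.val.1) :
    wActL Gg S (mulChar Gg S t t') q = wActL Gg S t (wActL Gg S t' q) := by
  obtain ⟨h, hs⟩ := hwRep_spec q
  refine Subtype.ext (Prod.ext (by rw [wActL_fst, wActL_fst, wActL_fst]) ?_)
  rw [wActL_snd hS h, wActL_snd hS ((wActL_fst t' q).trans h), wActL_snd hS h,
    adChar_mulChar hS _ htt', mulChar_assoc hS (by rw [pChar_adChar, pChar_adChar])
      (by rw [pChar_adChar, hs])]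

theorem pChar_wR_wActL (hS : IsWideNormalAbelian Gg S) {t : sHat Gg S} {q : actGpd Gg S}
    (ht : t.val.1 = (wR Gg S q).val.1) :
    (wR Gg S (wActL Gg S t q)).val.1 = t.val.1 := by
  obtain ⟨h, -⟩ := hwRep_spec q
  rw [pChar_wR hS ((wActL_fst t q).trans h), ht, pChar_wR hS h]

theorem eq_eChar_of_wActL_eq (hS : IsWideNormalAbelian Gg S) {t : sHat Gg S} {q : actGpd Gg S}
    (ht : t.val.1 = (wR Gg S q).val.1) (he : wActL Gg S t q = q) :
    t = eChar Gg S (wR Gg S q).val.1 := by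
  obtain ⟨h, hs⟩ := hwRep_spec q
  have hp : (adChar Gg S (hwRep Gg S q) t).val.1 = q.val.2.val.1 := by rw [pChar_adChar, hs]
  have hv := congrArg (fun z : actGpd Gg S => z.val.2) he
  simp only [wActL_snd hS h t] at hv
  rw [mulChar_comm hS hp] at hv
  rw [pChar_wR hS h] at ht ⊢
  rw [← adChar_inv_adChar hS ht, eq_eChar_of_mulChar_eq_right hS hp.symm hv, adChar_eChar hS,
    Gg.s_inv]

theorem wActR_eChar (hS : IsWideNormalAbelian Gg S) (q : actGpd Gg S) :
    wActR Gg S q (eChar Gg S q.val.2.val.1) = q := by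
  refine Subtype.ext (Prod.ext (wActR_fst q _) ?_)
  rw [wActR_snd, mulChar_comm hS (x := q.val.2) (y := eChar Gg S q.val.2.val.1) rfl,
    eChar_mulChar hS]

theorem wActR_mulChar (hS : IsWideNormalAbelian Gg S) {q : actGpd Gg S} {t t' : sHat Gg S}
    (ht : t.val.1 = q.val.2.val.1) (ht' : t'.val.1 = t.val.1) :
    wActR Gg S q (mulChar Gg S t t') = wActR Gg S (wActR Gg S q t) t' := by
  refine Subtype.ext (Prod.ext (by rw [wActR_fst, wActR_fst, wActR_fst]) ?_)
  rw [wActR_snd, wActR_snd, wActR_snd, mulChar_assoc hS ht.symm ht'.symm]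

theorem pChar_wS_wActR (q : actGpd Gg S) (t : sHat Gg S) :
    (wActR Gg S q t).val.2.val.1 = q.val.2.val.1 := by
  rw [wActR_snd, pChar_mulChar]

theorem eq_eChar_of_wActR_eq (hS : IsWideNormalAbelian Gg S) {q : actGpd Gg S} {t : sHat Gg S}
    (ht : t.val.1 = q.val.2.val.1) (he : wActR Gg S q t = q) :
    t = eChar Gg S q.val.2.val.1 := by
  have hv := congrArg (fun z : actGpd Gg S => z.val.2) he
  simp only [wActR_snd q t] at hv
  exact eq_eChar_of_mulChar_eq_right hS ht.symm hv

theorem wActR_wActL_comm (hS : IsWideNormalAbelian Gg S) {t : sHat Gg S} {q : actGpd Gg S}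
    {t' : sHat Gg S} (ht' : t'.val.1 = q.val.2.val.1) :
    wActR Gg S (wActL Gg S t q) t' = wActL Gg S t (wActR Gg S q t') := by
  obtain ⟨h, hs⟩ := hwRep_spec q
  refine Subtype.ext (Prod.ext (by rw [wActR_fst, wActL_fst, wActL_fst, wActR_fst]) ?_)
  rw [wActR_snd, wActL_snd hS ((wActR_fst q t').trans h), wActL_snd hS h, wActR_snd,
    mulChar_assoc hS (by rw [pChar_adChar, hs]) ht'.symm]

theorem wActL_wUnit (hS : IsWideNormalAbelian Gg S) {u t : sHat Gg S} (ht : t.val.1 = u.val.1) :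
    wActL Gg S t (wUnit Gg S u) = wActR Gg S (wUnit Gg S u) t := by
  refine Subtype.ext (Prod.ext (by rw [wActL_fst, wActR_fst]) ?_)
  rw [wActL_snd hS rfl, wActR_snd, adChar_unit hS ht]
  exact mulChar_comm hS ht

theorem wUnit_wR_wActL (hS : IsWideNormalAbelian Gg S) {t : sHat Gg S} {q : actGpd Gg S}
    (ht : t.val.1 = (wR Gg S q).val.1) :
    wUnit Gg S (wR Gg S (wActL Gg S t q)) = wActL Gg S t (wUnit Gg S (wR Gg S q)) := by
  obtain ⟨h, -⟩ := hwRep_spec q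
  refine Subtype.ext (Prod.ext ?_ ?_)
  · rw [wActL_fst]
    show cls Gg S (Gg.unit (wR Gg S (wActL Gg S t q)).val.1) =
      cls Gg S (Gg.unit (wR Gg S q).val.1)
    rw [pChar_wR_wActL hS ht, ht]
  · rw [wActL_snd hS rfl, adChar_unit hS ht]
    exact wR_wActL hS h (ht.trans (pChar_wR hS h))

theorem wUnit_wS_wActR {q : actGpd Gg S} (t : sHat Gg S) :
    wUnit Gg S (wS Gg S (wActR Gg S q t)) = wActR Gg S (wUnit Gg S (wS Gg S q)) t := by
  refine Subtype.ext (Prod.ext ?_ ?_)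
  · rw [wActR_fst]
    show cls Gg S (Gg.unit (wActR Gg S q t).val.2.val.1) = cls Gg S (Gg.unit q.val.2.val.1)
    rw [pChar_wS_wActR]
  · rw [wActR_snd]
    exact wActR_snd q t

theorem pChar_wLam (hS : IsWideNormalAbelian Gg S) (q : actGpd Gg S) (t : sHat Gg S) :
    (wLam Gg S q t).val.1 = (wR Gg S q).val.1 := by
  obtain ⟨h, -⟩ := hwRep_spec q
  rw [wLam_eq hS h, pChar_adChar, Gg.s_inv, pChar_wR hS h]

theorem wActR_eq_wActL_wLam (hS : IsWideNormalAbelian Gg S) {q : actGpd Gg S} {t : sHat Gg S}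
    (ht : t.val.1 = q.val.2.val.1) :
    wActR Gg S q t = wActL Gg S (wLam Gg S q t) q := by
  obtain ⟨h, hs⟩ := hwRep_spec q
  refine Subtype.ext (Prod.ext (by rw [wActR_fst, wActL_fst]) ?_)
  rw [wActR_snd, wActL_snd hS h, wLam_eq hS h, adChar_adChar_inv hS (ht.trans hs),
    mulChar_comm hS ht.symm]

theorem wActL_eq_wActR_wRho (hS : IsWideNormalAbelian Gg S) {q : actGpd Gg S} (t : sHat Gg S) :
    wActL Gg S t q = wActR Gg S q (wRho Gg S q t) := by
  obtain ⟨h, hs⟩ := hwRep_spec q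
  refine Subtype.ext (Prod.ext (by rw [wActR_fst, wActL_fst]) ?_)
  rw [wActL_snd hS h, wActR_snd, wRho_eq hS h, mulChar_comm hS (by rw [pChar_adChar, hs])]

theorem pChar_wRho (hS : IsWideNormalAbelian Gg S) (q : actGpd Gg S) (t : sHat Gg S) :
    (wRho Gg S q t).val.1 = q.val.2.val.1 := by
  obtain ⟨h, hs⟩ := hwRep_spec q
  rw [wRho_eq hS h, pChar_adChar, hs]

theorem wActR_wMul (hS : IsWideNormalAbelian Gg S) {q₁ q₂ : actGpd Gg S} {t : sHat Gg S}
    (hq : wS Gg S q₁ = wR Gg S q₂) (ht : t.val.1 = q₂.val.2.val.1) :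
    wActR Gg S (wMul Gg S q₁ q₂) t =
      wMul Gg S (wActR Gg S q₁ (wLam Gg S q₂ t)) (wActR Gg S q₂ t) := by
  obtain ⟨h₁, -⟩ := hwRep_spec q₁
  obtain ⟨h₂, -⟩ := hwRep_spec q₂
  have hq' : wS Gg S (wActR Gg S q₁ (wLam Gg S q₂ t)) = wR Gg S (wActR Gg S q₂ t) := by
    rw [wR_eq_adChar_inv hS ((wActR_fst q₂ t).trans h₂), wActR_snd,
      adChar_mulChar hS _ ht.symm, ← wR_eq_adChar_inv hS h₂, ← wLam_eq hS h₂, ← hq]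
    exact wActR_snd q₁ _
  refine Subtype.ext ?_
  rw [wMul_val hS ((wActR_fst q₁ _).trans h₁) ((wActR_fst q₂ t).trans h₂) hq']
  refine Prod.ext ((wActR_fst _ t).trans (wMul_fst hS h₁ h₂ hq)) ?_
  rw [wActR_snd, wActR_snd, wMul_snd hS hq]

theorem wActL_wMul (hS : IsWideNormalAbelian Gg S) {q₁ q₂ : actGpd Gg S} (t : sHat Gg S)
    (hq : wS Gg S q₁ = wR Gg S q₂) :
    wActL Gg S t (wMul Gg S q₁ q₂) =
      wMul Gg S (wActL Gg S t q₁) (wActL Gg S (wRho Gg S q₁ t) q₂) := by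
  obtain ⟨h₁, hs₁⟩ := hwRep_spec q₁
  obtain ⟨h₂, -⟩ := hwRep_spec q₂
  have hc := s_eq_r_of_wS_eq_wR hS h₁ h₂ hq
  have hq' : wS Gg S (wActL Gg S t q₁) = wR Gg S (wActL Gg S (wRho Gg S q₁ t) q₂) := by
    rw [wR_wActL hS h₂ (by rw [pChar_wRho hS, hs₁, hc]), ← hq, wRho_eq hS h₁]
    exact wActL_snd hS h₁ t
  refine Subtype.ext ?_
  rw [wMul_val hS ((wActL_fst t q₁).trans h₁) ((wActL_fst _ q₂).trans h₂) hq']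
  refine Prod.ext ((wActL_fst t _).trans (wMul_fst hS h₁ h₂ hq)) ?_
  rw [wActL_snd hS (wMul_fst hS h₁ h₂ hq), wMul_snd hS hq, wActL_snd hS h₂, wRho_eq hS h₁,
    adChar_adChar hS hc]

theorem wInv_wActR (hS : IsWideNormalAbelian Gg S) {q : actGpd Gg S} {t : sHat Gg S}
    (ht : t.val.1 = q.val.2.val.1) :
    wInv Gg S (wActR Gg S q t) = wActL Gg S t (wInv Gg S q) := by
  obtain ⟨h, -⟩ := hwRep_spec q
  refine Subtype.ext ?_
  rw [wInv_val hS ((wActR_fst q t).trans h)]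
  refine Prod.ext ((wActL_fst t _).trans (wInv_fst hS h)).symm ?_
  rw [wActL_snd hS (wInv_fst hS h), wInv_snd hS,
    wR_eq_adChar_inv hS ((wActR_fst q t).trans h), wActR_snd, adChar_mulChar hS _ ht.symm,
    ← wR_eq_adChar_inv hS h]
  exact mulChar_comm hS (by rw [pChar_wR hS h, pChar_adChar, Gg.s_inv])

theorem wInv_wActL (hS : IsWideNormalAbelian Gg S) {q : actGpd Gg S} {t : sHat Gg S}
    (ht : t.val.1 = (wR Gg S q).val.1) :
    wInv Gg S (wActL Gg S t q) = wActR Gg S (wInv Gg S q) t := by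
  obtain ⟨h, -⟩ := hwRep_spec q
  refine Subtype.ext ?_
  rw [wInv_val hS ((wActL_fst t q).trans h)]
  refine Prod.ext ((wActR_fst _ t).trans (wInv_fst hS h)).symm ?_
  rw [wActR_snd, wInv_snd hS, wR_wActL hS h (ht.trans (pChar_wR hS h))]
  exact mulChar_comm hS ht

noncomputable def actionGroupoidAssumption51 (hS : IsWideNormalAbelian Gg S) :
    Assumption51 (actGpd Gg S) (sHat Gg S) U where
  gpd := actionGroupoid hS
  bund := charBundle hS
  actL := wActL Gg S
  actR := wActR Gg S
  lam := wLam Gg S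
  rho := wRho Gg S
  actL_id := wActL_eChar hS
  actL_mul _ _ _ htt' _ := wActL_mulChar hS htt'
  pr_actL _ _ := pChar_wR_wActL hS
  actL_free _ _ := eq_eChar_of_wActL_eq hS
  actR_id := wActR_eChar hS
  actR_mul _ _ _ := wActR_mulChar hS
  ps_actR q t ht := (pChar_wS_wActR q t).trans ht.symm
  actR_free _ _ := eq_eChar_of_wActR_eq hS
  act_comm _ _ _ _ := wActR_wActL_comm hS
  unit_act _ _ := wActL_wUnit hS
  r_actL _ _ := wUnit_wR_wActL hS
  s_actR _ t _ := wUnit_wS_wActR t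
  lam_p q t _ := pChar_wLam hS q t
  rho_p q t _ := pChar_wRho hS q t
  spec_a _ _ := wActR_eq_wActL_wLam hS
  spec_b _ t _ := wActL_eq_wActR_wRho hS t
  spec_c _ _ _ := wActR_wMul hS
  spec_d _ _ t hc _ := wActL_wMul hS t hc
  spec_e _ _ := wInv_wActR hS
  spec_f _ _ := wInv_wActL hS

/-- Proposition 5.3 (algebraic part, trivial 2-cocycle): let `G` be a groupoid and
`S ⊆ Iso(G)` a wide normal subgroupoid with abelian isotropy fibres.  Then
(i) `Ad_γ(t̂)(a) = t̂(γaγ⁻¹)` (and likewise `([γ].x)(a) = x(γ⁻¹aγ)`) depends only on the class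
`[γ] ∈ G/S`; and (ii)–(iii) the action groupoid `H = (G/S) ⋉ Ŝ`, with unit space `T = Ŝ`
fibred over `X = G⁰`, the left action `t̂ ▶ ([γ],x) = ([γ], Ad_γ(t̂)·x)`, the right action
`([γ],x) ◀ t̂ = ([γ], x·t̂)`, and `λ_{([γ],x)} = Ad_{γ⁻¹}`, `ρ_{([γ],x)} = Ad_γ`, satisfies all
the algebraic conditions of Assumption 5.1 (commuting free actions along `p∘r` and `p∘s`
satisfying (1a), (1b) and (2a)–(2f)). -/
theorem prop53 (Gg : RawGroupoid Hm U) (S : Set Hm)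
    (hSiso : ∀ a ∈ S, Gg.r a = Gg.s a)
    (hSwide : ∀ x : U, Gg.unit x ∈ S)
    (hSmul : ∀ a b, a ∈ S → b ∈ S → Gg.s a = Gg.r b → Gg.mul a b ∈ S)
    (hSinv : ∀ a ∈ S, Gg.inv a ∈ S)
    (hSnormal : ∀ γ a, a ∈ S → Gg.r a = Gg.r γ →
      Gg.mul (Gg.mul (Gg.inv γ) a) γ ∈ S)
    (hSab : ∀ a b, a ∈ S → b ∈ S → Gg.s a = Gg.r b → Gg.r a = Gg.s b →
      Gg.mul a b = Gg.mul b a) :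
    -- (i) `Ad_γ` and `[γ].(−)` depend only on the class of `γ` in `G/S`
    (∀ γ γ' : Hm, γ' ∈ cls Gg S γ → ∀ χ : Hm → Circle,
        adFun Gg S γ χ = adFun Gg S γ' χ ∧ dotFun Gg S γ χ = dotFun Gg S γ' χ) ∧
    -- (ii), (iii): `(H, T) = ((G/S) ⋉ Ŝ, Ŝ)` with the data above satisfies Assumption 5.1
    (∃ A : Assumption51 (actGpd Gg S) (sHat Gg S) U,
        A.gpd.r = wR Gg S ∧
        A.gpd.s = wS Gg S ∧
        A.gpd.mul = wMul Gg S ∧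
        A.gpd.inv = wInv Gg S ∧
        A.gpd.unit = wUnit Gg S ∧
        A.bund.p = pChar Gg S ∧
        A.bund.e = eChar Gg S ∧
        A.bund.bmul = mulChar Gg S ∧
        A.bund.binv = invChar Gg S ∧
        A.actL = wActL Gg S ∧
        A.actR = wActR Gg S ∧
        A.lam = wLam Gg S ∧
        A.rho = wRho Gg S) := by
  have hS : IsWideNormalAbelian Gg S := ⟨hSiso, hSwide, hSmul, hSinv, hSnormal, hSab⟩
  exact ⟨fun γ γ' h χ => ⟨(adFun_eq_of_mem_cls hS h χ).symm, (dotFun_eq_of_mem_cls hS h χ).symm⟩,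
    actionGroupoidAssumption51 hS, rfl, rfl, rfl, rfl, rfl, rfl, rfl, rfl, rfl, rfl, rfl, rfl, rfl⟩

end WeylConstruction
end
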